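/- arXiv:1110.2935 — 8 statements merged into one kernel-verified Lean document; each statement's English description precedes it below -/
import Mathlib

section
/- Let G be a simple graph and M a module of G with |M| ≥ 2. Then M is minimal (under inclusion) among modules of G of cardinality at least 2 if and only if either |M| = 2 or the induced subgraph G[M] is prime. -/
/-- `M` is a module of `G`: every vertex outside `M` is adjacent to all of `M` or to none. -/
def IsModule {V : Type*} (G : SimpleGraph V) (M : Set V) : Prop :=
  ∀ v ∉ M, (∀ m ∈ M, G.Adj v m) ∨ (∀ m ∈ M, ¬ G.Adj v m)

/-- `G` is prime: at least 4 vertices and only trivial modules. -/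
def IsPrimeGraph {V : Type*} (G : SimpleGraph V) : Prop :=
  4 ≤ Nat.card V ∧ ∀ M : Set V, IsModule G M → M = Set.univ ∨ M.Subsingleton

lemma module_induce {V : Type*} (G : SimpleGraph V) (M N : Set V)
    (hN : IsModule G N) : IsModule (G.induce M) {x : M | ↑x ∈ N} := by
  intro v hv
  rcases hN ↑v hv with h | h
  · left; intro m hm; exact h ↑m hm
  · right; intro m hm; exact h ↑m hm

lemma module_of_induce {V : Type*} (G : SimpleGraph V) (M N : Set V)
    (hM : IsModule G M) (hNM : N ⊆ M)
    (h' : IsModule (G.induce M) {x : M | ↑x ∈ N}) : IsModule G N := by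
  intro v hv
  by_cases hvM : v ∈ M
  · rcases h' ⟨v, hvM⟩ hv with h | h
    · left; intro m hm; exact h ⟨m, hNM hm⟩ hm
    · right; intro m hm; exact h ⟨m, hNM hm⟩ hm
  · rcases hM v hvM with h | h
    · left; intro m hm; exact h m (hNM hm)
    · right; intro m hm; exact h m (hNM hm)

lemma pair_module {V : Type*} (G : SimpleGraph V) (M : Set V) (hM : IsModule G M)
    (a b c : V) (hMe : M = {a, b, c}) (hca : c ≠ a) (hcb : c ≠ b)
    (h : G.Adj c a ↔ G.Adj c b) : IsModule G {a, b} := by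
  intro v hv
  by_cases hvM : v ∈ M
  · have hvc : v = c := by
      rw [hMe] at hvM
      rcases hvM with h1 | h1 | h1
      · exact absurd (Or.inl h1) hv
      · exact absurd (Or.inr h1) hv
      · exact h1
    subst hvc
    by_cases hadj : G.Adj v a
    · left; rintro m (rfl | rfl)
      · exact hadj
      · exact h.mp hadj
    · right; rintro m (rfl | rfl)
      · exact hadj
      · exact fun hh => hadj (h.mpr hh)
  · rcases hM v hvM with h1 | h1
    · left; rintro m (rfl | rfl)
      · exact h1 m (by rw [hMe]; left; rfl)
      · exact h1 m (by rw [hMe]; right; left; rfl)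
    · right; rintro m (rfl | rfl)
      · exact h1 m (by rw [hMe]; left; rfl)
      · exact h1 m (by rw [hMe]; right; left; rfl)

theorem minimal_module_iff {V : Type*} [Finite V] (G : SimpleGraph V) (M : Set V)
    (hM : IsModule G M) (h2 : 2 ≤ M.ncard) :
    (∀ N : Set V, IsModule G N → 2 ≤ N.ncard → N ⊆ M → N = M) ↔
      (M.ncard = 2 ∨ IsPrimeGraph (G.induce M)) := by
  have hMfin : M.Finite := Set.toFinite M
  constructor
  · intro hmin
    by_cases hM2 : M.ncard = 2
    · exact Or.inl hM2
    right
    -- first, M.ncard ≠ 3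
    have hM3 : M.ncard ≠ 3 := by
      intro h3
      obtain ⟨a, b, c, hab, hac, hbc, hMe⟩ := (Set.ncard_eq_three).mp h3
      -- find a pair that is a module
      have key : ∃ x y : V, x ≠ y ∧ IsModule G {x, y} ∧ ({x, y} : Set V) ⊆ M := by
        by_cases h1 : G.Adj c a ↔ G.Adj c b
        · exact ⟨a, b, hab, pair_module G M hM a b c hMe (Ne.symm hac) (Ne.symm hbc) h1,
            by rw [hMe]; intro x hx; rcases hx with rfl | rfl <;> simp⟩
        by_cases hA : G.Adj a b ↔ G.Adj a c
        · refine ⟨b, c, hbc, pair_module G M hM b c a ?_ hab hac hA, ?_⟩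
          · rw [hMe]; ext x; simp; tauto
          · rw [hMe]; intro x hx; rcases hx with rfl | rfl <;> simp
        · -- then G.Adj b a ↔ G.Adj b c must hold
          have hB : G.Adj b a ↔ G.Adj b c := by
            rw [G.adj_comm c a, G.adj_comm c b] at h1
            rw [G.adj_comm b a]
            tauto
          refine ⟨a, c, hac, pair_module G M hM a c b ?_ (Ne.symm hab) hbc hB, ?_⟩
          · rw [hMe]; ext x; simp; tauto
          · rw [hMe]; intro x hx; rcases hx with rfl | rfl <;> simp
      obtain ⟨x, y, hxy, hmod, hsub⟩ := key
      have := hmin {x, y} hmod (by rw [Set.ncard_pair hxy]) hsub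
      rw [← this, Set.ncard_pair hxy] at h3
      omega
    constructor
    · rw [Nat.card_coe_set_eq]
      omega
    · intro N' hN'
      by_cases hss : N'.Subsingleton
      · exact Or.inr hss
      left
      have hN'2 : 2 ≤ N'.ncard := by
        rw [Set.not_subsingleton_iff] at hss
        exact (Set.one_lt_ncard_iff (Set.toFinite N')).mpr
          (by obtain ⟨x, hx, y, hy, hxy⟩ := hss; exact ⟨x, y, hx, hy, hxy⟩)
      set N : Set V := Subtype.val '' N' with hNdef
      have hNM : N ⊆ M := by rintro _ ⟨⟨x, hx⟩, _, rfl⟩; exact hx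
      have hNset : {x : M | ↑x ∈ N} = N' := by
        ext x
        simp only [Set.mem_setOf_eq, hNdef, Set.mem_image]
        constructor
        · rintro ⟨y, hy, hxy⟩
          rwa [Subtype.val_injective hxy] at hy
        · intro hx; exact ⟨x, hx, rfl⟩
      have hNmod : IsModule G N := by
        apply module_of_induce G M N hM hNM
        rw [hNset]; exact hN'
      have hNcard : N.ncard = N'.ncard := Set.ncard_image_of_injective _ Subtype.val_injective
      have hNeq : N = M := hmin N hNmod (by omega) hNM
      have : Subtype.val '' N' = Subtype.val '' (Set.univ : Set M) := by
        rw [Subtype.coe_image_univ]; exact hNeq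
      exact Set.image_injective.mpr Subtype.val_injective this
  · intro h N hN hN2 hNM
    rcases h with hM2 | ⟨hcard, hprime⟩
    · exact Set.eq_of_subset_of_ncard_le hNM (by omega) hMfin
    · have hind := module_induce G M N hN
      rcases hprime _ hind with huniv | hss
      · apply Set.Subset.antisymm hNM
        intro x hx
        have : (⟨x, hx⟩ : M) ∈ {x : M | ↑x ∈ N} := by rw [huniv]; trivial
        exact this
      · exfalso
        have : N = Subtype.val '' {x : M | ↑x ∈ N} := by
          ext x
          simp only [Set.mem_image, Set.mem_setOf_eq]
          constructor
          · intro hx; exact ⟨⟨x, hNM hx⟩, hx, rfl⟩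
          · rintro ⟨y, hy, rfl⟩; exact hy
        have h1 : N.ncard ≤ 1 := by
          rw [this, Set.ncard_image_of_injective _ Subtype.val_injective]
          exact (Set.ncard_le_one (Set.toFinite _)).mpr fun a ha b hb => hss ha hb
        omega
end

section
/- Let S and S' be disjoint finite sets with |S'| ≥ 2 and 2^(|S'|-1) < |S| < 2^(|S'|). Let G be a graph on vertex set S ∪ S' in which both S and S' are stable (independent) sets. Then G is prime if and only if the map sending each s ∈ S to its neighborhood N_G(s) ⊆ S' is an injection from S into the nonempty subsets of S'. -/
/-!
Necessity holds in every prime graph: an isolated vertex `v` makes `{v}ᶜ` a module, and two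
vertices with the same neighbourhood form a module.

For sufficiency, let `M` be a nontrivial proper module. If `M` met both `S` and `S'`, stability
would force every vertex outside `M` to be adjacent to none of `M`, so `G` splits into `M` and
`Mᶜ`, both meeting `S'`; the injective neighbourhood map then gives
`|S| ≤ (2^k - 1) + (2^(n-k) - 1) ≤ 2^(n-1)` with `n = |S'|`, `k = |S' ∩ M|`. Hence `M ⊆ S` or
`M ⊆ S'`. Two vertices of `S` are separated by a vertex of `S'`, because their neighbourhoods
differ. Two vertices `a ≠ b` of `S'` are separated by a vertex of `S`: otherwise `N(s) \ {b}`
would still be an injective map from `S` into the nonempty subsets of `S' \ {b}`, and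
`|S| < 2^(n-1)`. In either case the separating vertex lies outside `M`, contradicting that `M`
is a module.
-/

open Set

theorem Set.eq_of_sdiff_singleton_eq {α : Type*} {A B : Set α} {a b : α} (hab : a ≠ b)
    (hA : a ∈ A ↔ b ∈ A) (hB : a ∈ B ↔ b ∈ B) (h : A \ {b} = B \ {b}) : A = B := by
  ext t
  by_cases htb : t = b
  · subst htb
    rw [← hA, ← hB]
    simpa [hab] using Set.ext_iff.1 h a
  · simpa [htb] using Set.ext_iff.1 h t

theorem Set.ncard_lt_two_pow_of_injOn {α β : Type*} {f : α → Set β} {S : Set α} {T : Set β}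
    (hT : T.Finite) (hf : InjOn f S) (hfT : ∀ s ∈ S, f s ⊆ T)
    (hne : ∀ s ∈ S, (f s).Nonempty) : S.ncard < 2 ^ T.ncard := by
  have himage : f '' S ⊂ 𝒫 T := by
    refine ⟨image_subset_iff.2 hfT, fun h => ?_⟩
    obtain ⟨s, hs, hs0⟩ := h (mem_powerset (empty_subset T))
    exact (hne s hs).ne_empty hs0
  rw [← hf.ncard_image, ← ncard_powerset T hT]
  exact ncard_lt_ncard himage hT.powerset

theorem Nat.two_pow_add_two_pow_le {k m : ℕ} (hk : 1 ≤ k) (hm : 1 ≤ m) :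
    2 ^ k + 2 ^ m ≤ 2 ^ (k + m - 1) + 2 := by
  obtain ⟨k, rfl⟩ := Nat.exists_eq_add_of_le' hk
  obtain ⟨m, rfl⟩ := Nat.exists_eq_add_of_le' hm
  rw [show k + 1 + (m + 1) - 1 = k + m + 1 by omega, pow_succ, pow_succ, pow_succ, pow_add]
  nlinarith [@Nat.one_le_two_pow k, @Nat.one_le_two_pow m]

section

variable {V : Type*} {G : SimpleGraph V}

theorem SimpleGraph.exists_not_adj_iff_of_neighborSet_ne {a b : V}
    (h : G.neighborSet a ≠ G.neighborSet b) : ∃ v, ¬(G.Adj v a ↔ G.Adj v b) := by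
  by_contra! hall
  exact h (Set.ext fun v => by simpa [G.adj_comm] using hall v)

theorem IsModule.mem_of_not_adj_iff {M : Set V} {a b v : V} (hM : IsModule G M) (ha : a ∈ M)
    (hb : b ∈ M) (hv : ¬(G.Adj v a ↔ G.Adj v b)) : v ∈ M := by
  by_contra hvM
  rcases hM v hvM with h | h
  · exact hv (iff_of_true (h a ha) (h b hb))
  · exact hv (iff_of_false (h a ha) (h b hb))

theorem IsPrimeGraph.neighborSet_nonempty (hG : IsPrimeGraph G) (v : V) :
    (G.neighborSet v).Nonempty := by
  by_contra! hv
  have hM : IsModule G {v}ᶜ := by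
    intro w hw
    rw [notMem_compl_iff, mem_singleton_iff] at hw
    subst hw
    exact .inr fun m _ hwm => hv.subset hwm
  have : Finite V := Nat.finite_of_card_ne_zero (by linarith [hG.1])
  rcases hG.2 _ hM with h | h
  · exact (h ▸ mem_univ v : v ∈ ({v}ᶜ : Set V)) rfl
  · have : Nat.card V ≤ 2 :=
      calc Nat.card V = (insert v {v}ᶜ : Set V).ncard := by
            rw [insert_eq, union_compl_self, ncard_univ]
        _ ≤ ({v}ᶜ : Set V).ncard + 1 := ncard_insert_le _ _
        _ ≤ 2 := by have := ncard_le_one_iff_subsingleton.2 h; omega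
    linarith [hG.1]

theorem IsPrimeGraph.neighborSet_injective (hG : IsPrimeGraph G) :
    Function.Injective G.neighborSet := by
  intro a b hab
  have hM : IsModule G {a, b} := by
    intro v _
    have hv : G.Adj v a ↔ G.Adj v b := by
      rw [G.adj_comm v a, G.adj_comm v b]
      exact Set.ext_iff.1 hab v
    simp only [mem_insert_iff, mem_singleton_iff, forall_eq_or_imp, forall_eq, hv]
    tauto
  rcases hG.2 _ hM with h | h
  · have : Nat.card V ≤ 2 :=
      calc Nat.card V = ({a, b} : Set V).ncard := by rw [h, ncard_univ]
        _ ≤ ({b} : Set V).ncard + 1 := ncard_insert_le _ _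
        _ = 2 := by rw [ncard_singleton]
    linarith [hG.1]
  · exact h (mem_insert a _) (mem_insert_of_mem a rfl)

section Bipartite

variable {S M : Set V}

theorem neighborSet_subset_compl_of_stable (hS : ∀ a ∈ S, ∀ b ∈ S, ¬ G.Adj a b) {s : V}
    (hs : s ∈ S) : G.neighborSet s ⊆ Sᶜ :=
  fun t ht htS => hS s hs t htS ht

variable [Finite V]

theorem exists_mem_not_adj_iff_of_two_pow_lt (hS : ∀ a ∈ S, ∀ b ∈ S, ¬ G.Adj a b)
    (hne : ∀ s ∈ S, (G.neighborSet s).Nonempty) (hinj : InjOn G.neighborSet S)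
    (hlo : 2 ^ (Sᶜ.ncard - 1) < S.ncard) {a b : V} (hb : b ∈ Sᶜ) (hab : a ≠ b) :
    ∃ s ∈ S, ¬(G.Adj s a ↔ G.Adj s b) := by
  by_contra! htwin
  have hcount : S.ncard < 2 ^ (Sᶜ \ {b}).ncard := by
    refine Set.ncard_lt_two_pow_of_injOn (f := fun s => G.neighborSet s \ {b}) (toFinite _)
      (fun x hx y hy hxy => hinj hx hy ?_)
      (fun s hs => sdiff_subset_sdiff_left (neighborSet_subset_compl_of_stable hS hs))
      fun s hs => ?_
    · exact eq_of_sdiff_singleton_eq hab (htwin x hx) (htwin y hy) hxy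
    · obtain ⟨t, ht⟩ := hne s hs
      by_cases htb : t = b
      · exact ⟨a, (htwin s hs).2 (htb ▸ ht), hab⟩
      · exact ⟨t, ht, htb⟩
  rw [ncard_sdiff_singleton_of_mem hb] at hcount
  omega

theorem ncard_le_two_pow_of_not_adj_compl (hS : ∀ a ∈ S, ∀ b ∈ S, ¬ G.Adj a b)
    (hne : ∀ s ∈ S, (G.neighborSet s).Nonempty) (hinj : InjOn G.neighborSet S)
    (hsep : ∀ v ∉ M, ∀ m ∈ M, ¬ G.Adj v m) (hin : (Sᶜ ∩ M).Nonempty)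
    (hout : (Sᶜ \ M).Nonempty) : S.ncard ≤ 2 ^ (Sᶜ.ncard - 1) := by
  have hinside : (S ∩ M).ncard < 2 ^ (Sᶜ ∩ M).ncard :=
    Set.ncard_lt_two_pow_of_injOn (toFinite _) (hinj.mono inter_subset_left)
      (fun s ⟨hsS, hsM⟩ t ht => ⟨neighborSet_subset_compl_of_stable hS hsS ht,
        by_contra fun htM => hsep t htM s hsM ht.symm⟩) fun s hs => hne s hs.1
  have houtside : (S \ M).ncard < 2 ^ (Sᶜ \ M).ncard :=
    Set.ncard_lt_two_pow_of_injOn (toFinite _) (hinj.mono sdiff_subset)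
      (fun s ⟨hsS, hsM⟩ t ht => ⟨neighborSet_subset_compl_of_stable hS hsS ht,
        fun htM => hsep s hsM t htM ht⟩) fun s hs => hne s hs.1
  have hpow := Nat.two_pow_add_two_pow_le hin.ncard_pos hout.ncard_pos
  rw [ncard_inter_add_ncard_sdiff_eq_ncard] at hpow
  have := ncard_inter_add_ncard_sdiff_eq_ncard S M
  omega

theorem IsModule.subset_or_subset_compl (hS : ∀ a ∈ S, ∀ b ∈ S, ¬ G.Adj a b)
    (hS' : ∀ a ∈ Sᶜ, ∀ b ∈ Sᶜ, ¬ G.Adj a b) (hne : ∀ s ∈ S, (G.neighborSet s).Nonempty)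
    (hinj : InjOn G.neighborSet S) (hlo : 2 ^ (Sᶜ.ncard - 1) < S.ncard) (hM : IsModule G M)
    (hMuniv : M ≠ univ) : M ⊆ S ∨ M ⊆ Sᶜ := by
  by_contra! h
  obtain ⟨y, hyM, hyS⟩ := not_subset.1 h.1
  obtain ⟨x, hxM, hxS⟩ := not_subset.1 h.2
  rw [notMem_compl_iff] at hxS
  have hsep : ∀ v ∉ M, ∀ m ∈ M, ¬ G.Adj v m := by
    intro v hv
    refine (hM v hv).resolve_left fun hadj => ?_
    by_cases hvS : v ∈ S
    · exact hS v hvS x hxS (hadj x hxM)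
    · exact hS' v hvS y hyS (hadj y hyM)
  obtain ⟨v, hv⟩ := (ne_univ_iff_exists_notMem M).1 hMuniv
  have hout : (Sᶜ \ M).Nonempty := by
    by_cases hvS : v ∈ S
    · obtain ⟨t, ht⟩ := hne v hvS
      exact ⟨t, neighborSet_subset_compl_of_stable hS hvS ht, fun htM => hsep v hv t htM ht⟩
    · exact ⟨v, hvS, hv⟩
  have := ncard_le_two_pow_of_not_adj_compl hS hne hinj hsep ⟨y, hyS, hyM⟩ hout
  omega

end Bipartite

end

theorem bipartite_stable_prime_iff_general {V : Type*} [Finite V] (G : SimpleGraph V) (S : Set V)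
    (hS : ∀ a ∈ S, ∀ b ∈ S, ¬ G.Adj a b)
    (hS' : ∀ a ∈ Sᶜ, ∀ b ∈ Sᶜ, ¬ G.Adj a b)
    (hlo : 2 ^ (Sᶜ.ncard - 1) < S.ncard) :
    IsPrimeGraph G ↔
      ((∀ s ∈ S, (G.neighborSet s).Nonempty) ∧ Set.InjOn G.neighborSet S) := by
  refine ⟨fun hG => ⟨fun s _ => hG.neighborSet_nonempty s, hG.neighborSet_injective.injOn⟩, ?_⟩
  rintro ⟨hne, hinj⟩
  have hhi : S.ncard < 2 ^ Sᶜ.ncard := Set.ncard_lt_two_pow_of_injOn (toFinite _) hinj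
    (fun s hs => neighborSet_subset_compl_of_stable hS hs) hne
  have hSc : 2 ≤ Sᶜ.ncard := by
    by_contra! h
    interval_cases Sᶜ.ncard <;> omega
  have hcard := ncard_add_ncard_compl S
  refine ⟨by linarith [Nat.one_lt_two_pow (n := Sᶜ.ncard - 1) (by omega)], fun M hM =>
    or_iff_not_imp_left.2 fun hMuniv a ha b hb => by_contra fun hab => ?_⟩
  rcases hM.subset_or_subset_compl hS hS' hne hinj hlo hMuniv with hMS | hMSc
  · obtain ⟨t, ht⟩ :=
      G.exists_not_adj_iff_of_neighborSet_ne fun h => hab (hinj (hMS ha) (hMS hb) h)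
    have htS := hMS (hM.mem_of_not_adj_iff ha hb ht)
    exact ht (iff_of_false (hS t htS a (hMS ha)) (hS t htS b (hMS hb)))
  · obtain ⟨s, hs, hsab⟩ := exists_mem_not_adj_iff_of_two_pow_lt hS hne hinj hlo (hMSc hb) hab
    exact hMSc (hM.mem_of_not_adj_iff ha hb hsab) hs

theorem bipartite_stable_prime_iff {V : Type*} [Finite V] (G : SimpleGraph V) (S : Set V)
    (hS : ∀ a ∈ S, ∀ b ∈ S, ¬ G.Adj a b)
    (hS' : ∀ a ∈ Sᶜ, ∀ b ∈ Sᶜ, ¬ G.Adj a b)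
    (h2 : 2 ≤ Sᶜ.ncard)
    (hlo : 2 ^ (Sᶜ.ncard - 1) < S.ncard)
    (hhi : S.ncard < 2 ^ Sᶜ.ncard) :
    IsPrimeGraph G ↔
      ((∀ s ∈ S, (G.neighborSet s).Nonempty) ∧ Set.InjOn G.neighborSet S) :=
  bipartite_stable_prime_iff_general G S hS hS' hlo
end

section
/- Let S and S' be disjoint finite sets with |S| ≥ 3 and |S'| = ⌈log₂(|S|+1)⌉. Then there exists a prime graph G on vertex set S ∪ S' such that S and S' are stable sets in G, the map s ↦ N_G(s) is an injection from S into the nonempty subsets of S', and there is an injection φ : S' → S with N_G(φ(s')) = S' \ {s'} for each s' ∈ S'. -/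
/-!
Put `k = |S'|`, so that `k < |S| < 2 ^ k`. Then `S` can be mapped injectively to the nonempty
subsets of `S'` so that `S'` and every `S' \ {y}` are hit; taking these subsets as neighbourhoods
gives a connected bipartite graph. A module `M` with two vertices meets both sides: two vertices
of `S` are separated by a vertex of `S'`, since their neighbourhoods differ, and `y ≠ y'` in `S'`
are separated by the vertex with neighbourhood `S' \ {y}`. A module meeting both sides has no
neighbour outside itself, because such a neighbour is non-adjacent to the member of `M` on its own
side; by connectivity `M` is everything.
-/

open Set

section Bipartite

variable {V : Type*} {G : SimpleGraph V} {M P Q : Set V}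

theorem SimpleGraph.IsIndepSet.not_adj (hP : G.IsIndepSet P) {a b : V} (ha : a ∈ P)
    (hb : b ∈ P) : ¬ G.Adj a b :=
  fun hab => hP ha hb hab.ne hab

theorem SimpleGraph.IsIndepSet.mem_of_adj (hP : G.IsIndepSet P) (hcover : ∀ v, v ∈ P ∨ v ∈ Q)
    {p v : V} (hp : p ∈ P) (hpv : G.Adj p v) : v ∈ Q :=
  (hcover v).resolve_left fun hv => hP.not_adj hp hv hpv

theorem SimpleGraph.Connected.eq_univ_of_adj_mem (hG : G.Connected) {s : Set V}
    (hs : s.Nonempty) (h : ∀ u v, G.Adj u v → u ∈ s → v ∈ s) : s = univ := by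
  obtain ⟨u, hu⟩ := hs
  refine eq_univ_of_forall fun v => ?_
  obtain ⟨p⟩ := hG u v
  induction p with
  | nil => exact hu
  | cons hadj _ ih => exact ih (h _ _ hadj hu)

theorem SimpleGraph.connected_of_neighborSet_eq (hP : G.IsIndepSet P)
    (hcover : ∀ v, v ∈ P ∨ v ∈ Q) {w : V} (hw : G.neighborSet w = Q)
    (hne : ∀ p ∈ P, (G.neighborSet p).Nonempty) : G.Connected := by
  have hwQ : ∀ q ∈ Q, G.Reachable w q := fun q hq =>
    SimpleGraph.Adj.reachable (hw.symm ▸ hq : q ∈ G.neighborSet w)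
  refine G.connected_iff_exists_forall_reachable.2
    ⟨w, fun v => (hcover v).elim (fun hv => ?_) (hwQ v)⟩
  obtain ⟨q, hvq⟩ := hne v hv
  exact (hwQ q (hP.mem_of_adj hcover hv hvq)).trans hvq.symm.reachable

theorem IsModule.mem_of_adj_of_not_adj (hM : IsModule G M) {u v c : V} (hu : u ∈ M)
    (hv : v ∈ M) (hcu : G.Adj c u) (hcv : ¬ G.Adj c v) : c ∈ M := by
  by_contra hc
  rcases hM c hc with h | h
  · exact hcv (h v hv)
  · exact h u hu hcu

theorem IsModule.eq_univ_of_inter_nonempty (hM : IsModule G M) (hP : G.IsIndepSet P)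
    (hQ : G.IsIndepSet Q) (hcover : ∀ v, v ∈ P ∨ v ∈ Q) (hconn : G.Connected)
    (hMP : (M ∩ P).Nonempty) (hMQ : (M ∩ Q).Nonempty) : M = univ := by
  obtain ⟨s, hsM, hsP⟩ := hMP
  obtain ⟨x, hxM, hxQ⟩ := hMQ
  refine hconn.eq_univ_of_adj_mem ⟨s, hsM⟩ fun m v hmv hm => ?_
  rcases hcover v with hv | hv
  · exact hM.mem_of_adj_of_not_adj hm hsM hmv.symm (hP.not_adj hv hsP)
  · exact hM.mem_of_adj_of_not_adj hm hxM hmv.symm (hQ.not_adj hv hxQ)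

theorem IsModule.inter_nonempty_of_injOn_neighborSet (hM : IsModule G M) (hP : G.IsIndepSet P)
    (hcover : ∀ v, v ∈ P ∨ v ∈ Q) (hinj : InjOn G.neighborSet P) {u v : V} (hu : u ∈ M ∩ P)
    (hv : v ∈ M ∩ P) (huv : u ≠ v) : (M ∩ Q).Nonempty := by
  by_contra! hMQ
  have hsub : ∀ {a b : V}, a ∈ M ∩ P → b ∈ M → G.neighborSet a ⊆ G.neighborSet b := by
    intro a b ha hb c hac
    by_contra hbc
    have hcM := hM.mem_of_adj_of_not_adj ha.1 hb hac.symm fun h => hbc h.symm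
    exact hMQ.subset ⟨hcM, hP.mem_of_adj hcover ha.2 hac⟩
  exact huv (hinj hu.2 hv.2 ((hsub hu hv.1).antisymm (hsub hv hu.1)))

theorem IsModule.inter_nonempty_of_neighborSet_eq_diff (hM : IsModule G M)
    (hco : ∀ q ∈ Q, ∃ p ∈ P, G.neighborSet p = Q \ {q}) {u v : V} (hu : u ∈ M ∩ Q)
    (hv : v ∈ M ∩ Q) (huv : u ≠ v) : (M ∩ P).Nonempty := by
  obtain ⟨p, hp, hpN⟩ := hco u hu.2
  have hpv : G.Adj p v := (hpN ▸ ⟨hv.2, huv.symm⟩ : v ∈ G.neighborSet p)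
  have hpu : ¬ G.Adj p u := fun h => (hpN ▸ h : u ∈ Q \ {u}).2 rfl
  exact ⟨p, hM.mem_of_adj_of_not_adj hv.1 hu.1 hpv hpu, hp⟩

theorem IsModule.eq_univ_or_subsingleton_of_bipartite (hM : IsModule G M)
    (hP : G.IsIndepSet P) (hQ : G.IsIndepSet Q) (hcover : ∀ v, v ∈ P ∨ v ∈ Q)
    (hconn : G.Connected) (hinj : InjOn G.neighborSet P)
    (hco : ∀ q ∈ Q, ∃ p ∈ P, G.neighborSet p = Q \ {q}) : M = univ ∨ M.Subsingleton := by
  rcases M.subsingleton_or_nontrivial with h | ⟨u, hu, v, hv, huv⟩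
  · exact Or.inr h
  have hmeet : (M ∩ P).Nonempty ∧ (M ∩ Q).Nonempty := by
    rcases hcover u with huP | huQ <;> rcases hcover v with hvP | hvQ
    · exact ⟨⟨u, hu, huP⟩,
        hM.inter_nonempty_of_injOn_neighborSet hP hcover hinj ⟨hu, huP⟩ ⟨hv, hvP⟩ huv⟩
    · exact ⟨⟨u, hu, huP⟩, ⟨v, hv, hvQ⟩⟩
    · exact ⟨⟨v, hv, hvP⟩, ⟨u, hu, huQ⟩⟩
    · exact ⟨hM.inter_nonempty_of_neighborSet_eq_diff hco ⟨hu, huQ⟩ ⟨hv, hvQ⟩ huv, ⟨u, hu, huQ⟩⟩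
  exact Or.inl (hM.eq_univ_of_inter_nonempty hP hQ hcover hconn hmeet.1 hmeet.2)

end Bipartite

theorem Set.injOn_diff_singleton {β : Type*} (Q : Set β) : InjOn (fun q => Q \ {q}) Q :=
  fun a ha b _ (hab : Q \ {a} = Q \ {b}) =>
  by_contra fun hne => (hab ▸ ⟨ha, hne⟩ : a ∈ Q \ {a}).2 rfl

theorem exists_injOn_nonempty_subsets {α β : Type*} {P : Set α} {Q : Set β}
    (hQ : 2 ≤ Q.ncard) (hQP : Q.ncard < P.ncard) (hP : P.ncard < 2 ^ Q.ncard) :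
    ∃ ν : α → Set β, InjOn ν P ∧ (∀ p ∈ P, ν p ⊆ Q ∧ (ν p).Nonempty) ∧
      (∃ p ∈ P, ν p = Q) ∧ ∀ q ∈ Q, ∃ p ∈ P, ν p = Q \ {q} := by
  have hPfin : P.Finite := finite_of_ncard_pos (by omega)
  have hQfin : Q.Finite := finite_of_ncard_pos (by omega)
  set T : Set (Set β) := insert Q ((fun q => Q \ {q}) '' Q)
  set U : Set (Set β) := 𝒫 Q \ {∅}
  have hTU : T ⊆ U := by
    rintro A (hA | ⟨q, hq, rfl⟩)
    · rw [hA]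
      exact ⟨Subset.rfl, fun (h : Q = ∅) => by simp [h] at hQ⟩
    · refine ⟨sdiff_subset, fun (h : Q \ {q} = ∅) => ?_⟩
      have := ncard_sdiff_singleton_of_mem hq
      rw [h, ncard_empty] at this
      omega
  have hT : T.ncard ≤ P.ncard := by
    have := ncard_image_le (f := fun q => Q \ {q}) hQfin
    exact (ncard_insert_le _ _).trans (by omega)
  have hU : P.ncard ≤ U.ncard := by
    rw [ncard_sdiff_singleton_of_mem (empty_subset Q : ∅ ∈ 𝒫 Q), ncard_powerset Q hQfin]
    omega
  obtain ⟨R, hTR, hRU, hR⟩ := exists_subsuperset_card_eq hTU hT hU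
  have hRfin : R.Finite := (hQfin.powerset.sdiff).subset hRU
  obtain ⟨ν, hν⟩ := hPfin.exists_bijOn_of_encard_eq (t := R)
    (by rw [← hPfin.cast_ncard_eq, ← hRfin.cast_ncard_eq, hR])
  have hνU : ∀ p ∈ P, ν p ∈ U := fun p hp => hRU (hν.mapsTo hp)
  have hνT : ∀ A ∈ T, ∃ p ∈ P, ν p = A := fun A hA => hν.surjOn (hTR hA)
  exact ⟨ν, hν.injOn, fun p hp => ⟨(hνU p hp).1, nonempty_iff_ne_empty.2 (hνU p hp).2⟩,
    hνT Q (mem_insert _ _), fun q hq => hνT _ (mem_insert_of_mem _ (mem_image_of_mem _ hq))⟩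

theorem exists_graph_neighborSet_eq {V : Type*} {P Q : Set V} (hPQ : Disjoint P Q)
    (ν : V → Set V) (hν : ∀ p ∈ P, ν p ⊆ Q) :
    ∃ G : SimpleGraph V, G.IsIndepSet P ∧ G.IsIndepSet Q ∧ ∀ p ∈ P, G.neighborSet p = ν p := by
  refine ⟨SimpleGraph.fromRel fun a b => a ∈ P ∧ b ∈ ν a, ?_, ?_, fun p hp => ?_⟩
  · rintro a ha b hb - ⟨-, ⟨-, hba⟩ | ⟨-, hab⟩⟩
    · exact disjoint_left.1 hPQ hb (hν a ha hba)
    · exact disjoint_left.1 hPQ ha (hν b hb hab)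
  · rintro a ha b hb - ⟨-, ⟨haP, -⟩ | ⟨hbP, -⟩⟩
    · exact disjoint_left.1 hPQ haP ha
    · exact disjoint_left.1 hPQ hbP hb
  ext b
  simp only [SimpleGraph.mem_neighborSet, SimpleGraph.fromRel_adj]
  constructor
  · rintro ⟨-, ⟨-, h⟩ | ⟨hbP, hpb⟩⟩
    · exact h
    · exact absurd (hν b hbP hpb) (disjoint_left.1 hPQ hp)
  · intro h
    exact ⟨fun hpb => disjoint_left.1 hPQ hp (hpb ▸ hν p hp h), Or.inl ⟨hp, h⟩⟩

theorem exists_bipartite_graph {V : Type*} {P Q : Set V} (hPQ : Disjoint P Q)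
    (hQ : 2 ≤ Q.ncard) (hQP : Q.ncard < P.ncard) (hP : P.ncard < 2 ^ Q.ncard) :
    ∃ G : SimpleGraph V, G.IsIndepSet P ∧ G.IsIndepSet Q ∧
      (∀ p ∈ P, (G.neighborSet p).Nonempty) ∧ InjOn G.neighborSet P ∧
      (∃ w ∈ P, G.neighborSet w = Q) ∧ ∀ q ∈ Q, ∃ p ∈ P, G.neighborSet p = Q \ {q} := by
  obtain ⟨ν, hinj, hνQ, ⟨w, hwP, hw⟩, hco⟩ := exists_injOn_nonempty_subsets hQ hQP hP
  obtain ⟨G, hPind, hQind, hG⟩ := exists_graph_neighborSet_eq hPQ ν fun p hp => (hνQ p hp).1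
  refine ⟨G, hPind, hQind, fun p hp => hG p hp ▸ (hνQ p hp).2,
    hinj.congr fun p hp => (hG p hp).symm, ⟨w, hwP, (hG w hwP).trans hw⟩, fun q hq => ?_⟩
  obtain ⟨p, hp, hpq⟩ := hco q hq
  exact ⟨p, hp, (hG p hp).trans hpq⟩

theorem Nat.two_le_clog_two_succ {n : ℕ} (hn : 3 ≤ n) : 2 ≤ Nat.clog 2 (n + 1) :=
  (Nat.lt_clog_iff_pow_lt one_lt_two).2 (by omega)

theorem Nat.clog_two_succ_lt {n : ℕ} (hn : 3 ≤ n) : Nat.clog 2 (n + 1) < n := by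
  obtain ⟨m, rfl⟩ : ∃ m, n = m + 3 := ⟨n - 3, by omega⟩
  have hm := m.lt_two_pow_self
  refine Nat.lt_of_le_of_lt (Nat.clog_le_of_le_pow (y := m + 2) ?_) (by omega)
  rw [pow_add]
  omega

theorem exists_prime_bipartite_extension_general {α : Type*} (S S' : Set α)
    (hd : Disjoint S S')
    (h3 : 3 ≤ S.ncard) (hcard : S'.ncard = Nat.clog 2 (S.ncard + 1)) :
    ∃ G : SimpleGraph ↥(S ∪ S'),
      IsPrimeGraph G ∧
      (∀ a b : ↥(S ∪ S'), (a : α) ∈ S → (b : α) ∈ S → ¬ G.Adj a b) ∧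
      (∀ a b : ↥(S ∪ S'), (a : α) ∈ S' → (b : α) ∈ S' → ¬ G.Adj a b) ∧
      (∀ x : ↥(S ∪ S'), (x : α) ∈ S → (G.neighborSet x).Nonempty) ∧
      Set.InjOn G.neighborSet {x : ↥(S ∪ S') | (x : α) ∈ S} ∧
      ∃ φ : ↥(S ∪ S') → ↥(S ∪ S'),
        Set.InjOn φ {x : ↥(S ∪ S') | (x : α) ∈ S'} ∧
        ∀ x : ↥(S ∪ S'), (x : α) ∈ S' →
          (φ x : α) ∈ S ∧
          G.neighborSet (φ x) = {y : ↥(S ∪ S') | (y : α) ∈ S'} \ {x} := by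
  set P : Set ↥(S ∪ S') := {x | (x : α) ∈ S}
  set Q : Set ↥(S ∪ S') := {x | (x : α) ∈ S'}
  have hcover : ∀ v, v ∈ P ∨ v ∈ Q := fun v => v.2
  have hPcard : P.ncard = S.ncard :=
    ncard_preimage_of_injective_subset_range Subtype.val_injective
      (Subtype.range_coe ▸ subset_union_left)
  have hQcard : Q.ncard = Nat.clog 2 (S.ncard + 1) :=
    (ncard_preimage_of_injective_subset_range Subtype.val_injective
      (Subtype.range_coe ▸ subset_union_right)).trans hcard
  have hk := Nat.two_le_clog_two_succ h3
  have hkn := Nat.clog_two_succ_lt h3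
  have hnk := Nat.le_pow_clog one_lt_two (S.ncard + 1)
  obtain ⟨G, hP, hQ, hne, hinj, ⟨w, -, hw⟩, hco⟩ := exists_bipartite_graph (P := P) (Q := Q)
    (hd.preimage _) (by omega) (by omega) (by rw [hPcard, hQcard]; omega)
  have hprime : IsPrimeGraph G := by
    refine ⟨?_, fun M hM => hM.eq_univ_or_subsingleton_of_bipartite hP hQ hcover
      (G.connected_of_neighborSet_eq hP hcover hw hne) hinj hco⟩
    rw [Nat.card_coe_set_eq, ncard_union_eq hd (finite_of_ncard_pos (by omega))
      (finite_of_ncard_pos (by omega))]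
    omega
  choose! φ hφP hφ using hco
  refine ⟨G, hprime, fun a b => hP.not_adj, fun a b => hQ.not_adj, hne, hinj, φ,
    fun a ha b hb hab => Q.injOn_diff_singleton ha hb ?_, fun x hx => ⟨hφP x hx, hφ x hx⟩⟩
  exact (hφ a ha).symm.trans ((congrArg G.neighborSet hab).trans (hφ b hb))

theorem exists_prime_bipartite_extension {α : Type*} (S S' : Set α)
    (hSfin : S.Finite) (hS'fin : S'.Finite) (hd : Disjoint S S')
    (h3 : 3 ≤ S.ncard) (hcard : S'.ncard = Nat.clog 2 (S.ncard + 1)) :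
    ∃ G : SimpleGraph ↥(S ∪ S'),
      IsPrimeGraph G ∧
      (∀ a b : ↥(S ∪ S'), (a : α) ∈ S → (b : α) ∈ S → ¬ G.Adj a b) ∧
      (∀ a b : ↥(S ∪ S'), (a : α) ∈ S' → (b : α) ∈ S' → ¬ G.Adj a b) ∧
      (∀ x : ↥(S ∪ S'), (x : α) ∈ S → (G.neighborSet x).Nonempty) ∧
      Set.InjOn G.neighborSet {x : ↥(S ∪ S') | (x : α) ∈ S} ∧
      ∃ φ : ↥(S ∪ S') → ↥(S ∪ S'),
        Set.InjOn φ {x : ↥(S ∪ S') | (x : α) ∈ S'} ∧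
        ∀ x : ↥(S ∪ S'), (x : α) ∈ S' →
          (φ x : α) ∈ S ∧
          G.neighborSet (φ x) = {y : ↥(S ∪ S') | (y : α) ∈ S'} \ {x} :=
  exists_prime_bipartite_extension_general S S' hd h3 hcard
end

section
/- Let G be a prime graph and let α be a vertex not in V(G). Let H be a graph on V(G) ∪ {α} with H[V(G)] = G. If N_H(α) is not ∅, not V(G), and differs from N_G(v) and from N_G(v) ∪ {v} for every v ∈ V(G), then H is prime. -/
/-!
A module `M` of `H` meets `V` in a module of `G`, which is therefore all of `V` or at most one
vertex. If it is all of `V`, then either `M` is everything, or the new vertex `α` sees all or none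
of `V`. If it is at most one vertex and `M` is nontrivial, then `M = {α, v}`, so `α` and `v` see
the same vertices outside `{α, v}`: the neighbourhood of `α` is `N(v)` or `N(v) ∪ {v}`.
-/

namespace IsModule

variable {V W : Type*} {G : SimpleGraph V} {H : SimpleGraph W} {M : Set W}

theorem adj_iff (hM : IsModule H M) {x y z : W} (hx : x ∈ M) (hy : y ∈ M) (hz : z ∉ M) :
    H.Adj z x ↔ H.Adj z y := by
  rcases hM z hz with h | h
  · exact iff_of_true (h x hx) (h y hy)
  · exact iff_of_false (h x hx) (h y hy)

theorem preimage {f : V → W} (hf : ∀ a b, H.Adj (f a) (f b) ↔ G.Adj a b)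
    (hM : IsModule H M) : IsModule G (f ⁻¹' M) := by
  intro v hv
  rcases hM (f v) hv with h | h
  · exact Or.inl fun m hm => (hf v m).1 (h (f m) hm)
  · exact Or.inr fun m hm hadj => h (f m) hm ((hf v m).2 hadj)

end IsModule

section SumUnit

variable {V : Type*}

theorem four_le_card_sum_unit (h : 4 ≤ Nat.card V) : 4 ≤ Nat.card (V ⊕ Unit) := by
  have : Finite V := Nat.finite_of_card_ne_zero (by omega)
  rw [Nat.card_sum]
  omega

theorem Set.eq_univ_of_preimage_inl_eq_univ {M : Set (V ⊕ Unit)}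
    (hM : Sum.inl ⁻¹' M = Set.univ) (hα : Sum.inr () ∈ M) : M = Set.univ := by
  refine Set.eq_univ_of_forall ?_
  rintro (v | ⟨⟩)
  · exact (Set.ext_iff.1 hM v).2 trivial
  · exact hα

theorem Set.Subsingleton.of_preimage_inl {M : Set (V ⊕ Unit)}
    (hM : (Sum.inl ⁻¹' M).Subsingleton) (hα : Sum.inr () ∉ M) : M.Subsingleton := by
  have hrange : M ⊆ Set.range Sum.inl := by
    rintro (v | ⟨⟩) hx
    · exact ⟨v, rfl⟩
    · exact absurd hx hα
  rw [← Set.image_preimage_eq_of_subset hrange]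
  exact hM.image _

theorem Set.exists_inl_mem_of_nontrivial {M : Set (V ⊕ Unit)} (hM : M.Nontrivial) :
    ∃ v, Sum.inl v ∈ M := by
  obtain ⟨x, hx, hne⟩ := hM.exists_ne (Sum.inr ())
  rcases x with v | ⟨⟩
  · exact ⟨v, hx⟩
  · exact absurd rfl hne

end SumUnit

theorem Set.eq_or_eq_insert_of_forall_ne {V : Type*} {S N : Set V} {v : V} (hv : v ∉ N)
    (h : ∀ u ≠ v, u ∈ S ↔ u ∈ N) : S = N ∨ S = insert v N := by
  by_cases hvS : v ∈ S
  · right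
    ext u
    rcases eq_or_ne u v with rfl | huv
    · simp [hvS]
    · simp [huv, h u huv]
  · left
    ext u
    rcases eq_or_ne u v with rfl | huv
    · simp [hvS, hv]
    · exact h u huv

theorem prime_one_extension_general {V : Type*} (G : SimpleGraph V)
    (hG : IsPrimeGraph G) (H : SimpleGraph (V ⊕ Unit))
    (hext : ∀ a b : V, H.Adj (Sum.inl a) (Sum.inl b) ↔ G.Adj a b)
    (hne : {v : V | H.Adj (Sum.inr ()) (Sum.inl v)} ≠ ∅)
    (hnu : {v : V | H.Adj (Sum.inr ()) (Sum.inl v)} ≠ Set.univ)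
    (hv : ∀ v : V,
      {w : V | H.Adj (Sum.inr ()) (Sum.inl w)} ≠ G.neighborSet v ∧
      {w : V | H.Adj (Sum.inr ()) (Sum.inl w)} ≠ insert v (G.neighborSet v)) :
    IsPrimeGraph H := by
  obtain ⟨hcard, hprime⟩ := hG
  refine ⟨four_le_card_sum_unit hcard, fun M hM => ?_⟩
  rcases hprime _ (hM.preimage hext) with huniv | hsub <;> by_cases hα : Sum.inr () ∈ M
  · exact Or.inl (Set.eq_univ_of_preimage_inl_eq_univ huniv hα)
  · have hall : ∀ w : V, Sum.inl w ∈ M := fun w => (Set.ext_iff.1 huniv w).2 trivial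
    rcases hM _ hα with h | h
    · exact absurd (Set.eq_univ_of_forall fun w => h _ (hall w)) hnu
    · exact absurd (Set.eq_empty_of_forall_notMem fun w => h _ (hall w)) hne
  · refine or_iff_not_imp_right.2 fun hnt => ?_
    obtain ⟨v, hvM⟩ := Set.exists_inl_mem_of_nontrivial (Set.not_subsingleton_iff.1 hnt)
    have htwin : ∀ u ≠ v,
        u ∈ {w | H.Adj (Sum.inr ()) (Sum.inl w)} ↔ u ∈ G.neighborSet v := fun u huv => by
      have hu : Sum.inl u ∉ M := fun hu => huv (hsub hu hvM)
      simp only [Set.mem_ofPred_eq, SimpleGraph.mem_neighborSet, H.adj_comm (Sum.inr ()),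
        G.adj_comm v]
      exact (hM.adj_iff hα hvM hu).trans (hext u v)
    rcases Set.eq_or_eq_insert_of_forall_ne G.notMem_neighborSet_self htwin with h | h
    exacts [absurd h (hv v).1, absurd h (hv v).2]
  · exact Or.inr (hsub.of_preimage_inl hα)

theorem prime_one_extension {V : Type*} [Finite V] (G : SimpleGraph V)
    (hG : IsPrimeGraph G) (H : SimpleGraph (V ⊕ Unit))
    (hext : ∀ a b : V, H.Adj (Sum.inl a) (Sum.inl b) ↔ G.Adj a b)
    (hne : {v : V | H.Adj (Sum.inr ()) (Sum.inl v)} ≠ ∅)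
    (hnu : {v : V | H.Adj (Sum.inr ()) (Sum.inl v)} ≠ Set.univ)
    (hv : ∀ v : V,
      {w : V | H.Adj (Sum.inr ()) (Sum.inl w)} ≠ G.neighborSet v ∧
      {w : V | H.Adj (Sum.inr ()) (Sum.inl w)} ≠ insert v (G.neighborSet v)) :
    IsPrimeGraph H :=
  prime_one_extension_general G hG H hext hne hnu hv
end

section
/- Let G be a finite graph that admits a module S with |S| ≥ 2 which is a stable set in G. If H is an extension of G (i.e., V(H) ⊇ V(G) and H[V(G)] = G) with |V(H) \ V(G)| < log₂(|S|), then H is not prime. -/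
theorem small_extension_not_prime {W : Type*} [Finite W] (H : SimpleGraph W)
    (A : Set W) (S : Set W) (hSA : S ⊆ A)
    (hmod : IsModule (H.induce A) {x : A | (x : W) ∈ S})
    (hstable : ∀ a ∈ S, ∀ b ∈ S, ¬ H.Adj a b)
    (h2 : 2 ≤ S.ncard)
    (hsmall : 2 ^ Aᶜ.ncard < S.ncard) :
    ¬ IsPrimeGraph H := by
  classical
  rintro ⟨h4, hmods⟩
  -- pigeonhole: two elements of S with same adjacency to Aᶜ
  haveI : Fintype W := Fintype.ofFinite W
  have hcard : Fintype.card (↥Aᶜ → Bool) < Fintype.card S := by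
    have h1 : Fintype.card (↥Aᶜ → Bool) = 2 ^ Aᶜ.ncard := by
      rw [Fintype.card_fun, Fintype.card_bool, ← Nat.card_eq_fintype_card,
        Nat.card_coe_set_eq]
    have h2' : Fintype.card S = S.ncard := by
      rw [← Nat.card_eq_fintype_card, Nat.card_coe_set_eq]
    omega
  obtain ⟨s, t, hst, heq⟩ := Fintype.exists_ne_map_eq_of_card_lt
    (fun s : S => fun v : ↥Aᶜ => decide (H.Adj v s)) hcard
  have hadj : ∀ v ∉ A, (H.Adj v s ↔ H.Adj v t) := by
    intro v hv
    have h := congrFun heq ⟨v, hv⟩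
    simp only [decide_eq_decide] at h
    exact h
  set M : Set W := {(s : W), (t : W)} with hM
  have hsne : (s : W) ≠ (t : W) := fun h => hst (Subtype.ext h)
  have hmodM : IsModule H M := by
    intro v hv
    by_cases hvA : v ∈ A
    · by_cases hvS : v ∈ S
      · right
        rintro m (rfl | rfl)
        · exact hstable v hvS s s.2
        · exact hstable v hvS t t.2
      · have := hmod ⟨v, hvA⟩ hvS
        rcases this with h | h
        · left
          rintro m (rfl | rfl)
          · exact h ⟨s, hSA s.2⟩ s.2
          · exact h ⟨t, hSA t.2⟩ t.2
        · right
          rintro m (rfl | rfl)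
          · exact h ⟨s, hSA s.2⟩ s.2
          · exact h ⟨t, hSA t.2⟩ t.2
    · by_cases ha : H.Adj v s
      · left
        rintro m (rfl | rfl)
        · exact ha
        · exact (hadj v hvA).1 ha
      · right
        rintro m (rfl | rfl)
        · exact ha
        · exact fun h => ha ((hadj v hvA).2 h)
  rcases hmods M hmodM with h | h
  · have : (Set.univ : Set W).ncard ≤ 2 := by
      rw [← h, hM]
      calc ({(s : W), (t : W)} : Set W).ncard ≤ ({(t : W)} : Set W).ncard + 1 :=
            Set.ncard_insert_le _ _
        _ ≤ 2 := by simp [Set.ncard_singleton]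
    rw [Set.ncard_univ] at this
    omega
  · exact hsne (h (by simp [hM]) (by simp [hM]))
end

section
/- Let G be a finite graph with at least one isolated vertex, and let H be an extension of G with 2^{|V(H) \ V(G)|} ≤ |Iso(G)|, where Iso(G) is the set of isolated vertices of G. Then H is not prime. -/
theorem isolated_extension_not_prime {W : Type*} [Finite W] (H : SimpleGraph W)
    (A : Set W)
    (hiso : {v ∈ A | ∀ w ∈ A, ¬ H.Adj v w}.Nonempty)
    (hle : 2 ^ Aᶜ.ncard ≤ {v ∈ A | ∀ w ∈ A, ¬ H.Adj v w}.ncard) :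
    ¬ IsPrimeGraph H := by
  classical
  have : Fintype W := Fintype.ofFinite W
  rintro ⟨h4, hmod⟩
  set I : Set W := {v ∈ A | ∀ w ∈ A, ¬ H.Adj v w} with hIdef
  by_cases hemp : ∃ v ∈ I, ∀ x, ¬ H.Adj v x
  · obtain ⟨v, hvI, hv⟩ := hemp
    have hM : IsModule H ({v}ᶜ) := by
      intro u hu
      right
      intro m _
      have : u = v := by simpa using hu
      subst this
      exact hv m
    rcases hmod _ hM with h | h
    · have : v ∈ ({v}ᶜ : Set W) := h ▸ Set.mem_univ v
      simp at this
    · have h1 : ({v} : Set W).ncard + ({v}ᶜ : Set W).ncard = Nat.card W :=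
        Set.ncard_add_ncard_compl _
      have h2 : ({v}ᶜ : Set W).ncard ≤ 1 := by
        rcases Set.eq_empty_or_nonempty ({v}ᶜ : Set W) with he | ⟨x, hx⟩
        · simp [he]
        · rw [h.eq_singleton_of_mem hx]
          simp
      rw [Set.ncard_singleton] at h1
      omega
  · push_neg at hemp
    set f : W → Finset W := fun v => Finset.univ.filter (H.Adj v) with hf
    have hmaps : ∀ v ∈ I.toFinset, f v ∈ Aᶜ.toFinset.powerset.erase ∅ := by
      intro v hv
      rw [Set.mem_toFinset] at hv
      rw [Finset.mem_erase, Finset.mem_powerset]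
      constructor
      · obtain ⟨x, hx⟩ := hemp v hv
        intro h0
        have : x ∈ f v := by simp [hf, hx]
        rw [h0] at this
        simp at this
      · intro x hx
        simp only [hf, Finset.mem_filter] at hx
        rw [Set.mem_toFinset, Set.mem_compl_iff]
        intro hxA
        exact hv.2 x hxA hx.2
    have hcardt : (Aᶜ.toFinset.powerset.erase ∅).card = 2 ^ Aᶜ.ncard - 1 := by
      rw [Finset.card_erase_of_mem (by simp), Finset.card_powerset,
        Set.ncard_eq_toFinset_card']
    have hcards : 2 ^ Aᶜ.ncard ≤ I.toFinset.card := by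
      rwa [← Set.ncard_eq_toFinset_card']
    have hlt : (Aᶜ.toFinset.powerset.erase ∅).card < I.toFinset.card := by
      have : 1 ≤ 2 ^ Aᶜ.ncard := Nat.one_le_two_pow
      omega
    obtain ⟨v, hvI, w, hwI, hvw, hfeq⟩ :=
      Finset.exists_ne_map_eq_of_card_lt_of_maps_to hlt hmaps
    have heq : ∀ x, H.Adj v x ↔ H.Adj w x := by
      intro x
      have := Finset.ext_iff.mp hfeq x
      simpa [hf] using this
    have hM : IsModule H {v, w} := by
      intro u hu
      simp only [Set.mem_insert_iff, Set.mem_singleton_iff, not_or] at hu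
      by_cases h : H.Adj u v
      · left
        rintro m (rfl | rfl)
        · exact h
        · exact ((heq u).mp h.symm).symm
      · right
        rintro m (rfl | rfl)
        · exact h
        · intro h2
          exact h (((heq u).mpr h2.symm).symm)
    rcases hmod _ hM with h | h
    · have h2 : ({v, w} : Set W).ncard ≤ 2 := by
        refine le_trans (Set.ncard_insert_le _ _) ?_
        simp
      rw [h, Set.ncard_univ] at h2
      omega
    · exact hvw (h (by simp) (by simp))
end

section
/- Let G be a finite graph and X ⊊ V(G) with G[X] prime. For every module M of G, exactly one of the following holds: (i) X ⊆ M and every vertex of V(G) \ M sees X homogeneously (X is a module of G[X ∪ {v}] for each v ∉ M); (ii) there is a unique u ∈ X with M ∩ X = {u}, and for each v ∈ M \ {u}, {u, v} is a module of G[X ∪ {v}]; (iii) M ∩ X = ∅. -/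
theorem module_partition_wrt_prime_subgraph {V : Type*} [Finite V] (G : SimpleGraph V)
    (X : Set V) (hX : X ≠ Set.univ) (hXprime : IsPrimeGraph (G.induce X))
    (M : Set V) (hM : IsModule G M) :
    (X ⊆ M ∧ (∀ v ∉ M, (∀ x ∈ X, G.Adj v x) ∨ (∀ x ∈ X, ¬ G.Adj v x)) ∧
        ¬ (∃ u ∈ X, M ∩ X = {u}) ∧ ¬ (M ∩ X = ∅)) ∨
    ((∃! u, u ∈ X ∧ M ∩ X = {u} ∧
        ∀ v ∈ M, v ≠ u → ∀ w ∈ X, w ≠ u → (G.Adj w u ↔ G.Adj w v)) ∧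
        ¬ X ⊆ M ∧ ¬ (M ∩ X = ∅)) ∨
    (M ∩ X = ∅ ∧ ¬ X ⊆ M ∧ ¬ (∃ u ∈ X, M ∩ X = {u})) := by
  obtain ⟨hcard, hprime⟩ := hXprime
  have hnt : Nontrivial X := by
    have : 1 < Nat.card X := by omega
    exact Finite.one_lt_card_iff_nontrivial.mp this
  obtain ⟨⟨a, ha⟩, ⟨b, hb⟩, hab⟩ := hnt
  have hab' : a ≠ b := fun h => hab (Subtype.ext h)
  have hmod : IsModule (G.induce X) {x : X | ↑x ∈ M} := by
    intro v hv
    rcases hM v.1 hv with h | h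
    · left; intro m hm; exact h m.1 hm
    · right; intro m hm; exact h m.1 hm
  rcases hprime _ hmod with huniv | hsub
  · have hXM : X ⊆ M := by
      intro x hx
      have h1 : (⟨x, hx⟩ : X) ∈ (Set.univ : Set X) := Set.mem_univ _
      rw [← huniv] at h1; exact h1
    left
    refine ⟨hXM, ?_, ?_, ?_⟩
    · intro v hv
      rcases hM v hv with h | h
      · left; exact fun x hx => h x (hXM hx)
      · right; exact fun x hx => h x (hXM hx)
    · rintro ⟨u, hu, hMX⟩
      have h1 : a ∈ M ∩ X := ⟨hXM ha, ha⟩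
      have h2 : b ∈ M ∩ X := ⟨hXM hb, hb⟩
      rw [hMX] at h1 h2
      exact hab' (h1.trans h2.symm)
    · intro h
      have h1 : a ∈ M ∩ X := ⟨hXM ha, ha⟩
      rw [h] at h1; exact h1
  · have hsub' : (M ∩ X).Subsingleton := by
      rintro x ⟨hxM, hxX⟩ y ⟨hyM, hyX⟩
      have := hsub (show (⟨x, hxX⟩ : X) ∈ {x : X | ↑x ∈ M} from hxM) (show (⟨y, hyX⟩ : X) ∈ {x : X | ↑x ∈ M} from hyM)
      exact congrArg Subtype.val this
    rcases hsub'.eq_empty_or_singleton with he | ⟨u, hu⟩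
    · right; right
      refine ⟨he, ?_, ?_⟩
      · intro hXM
        have h1 : a ∈ M ∩ X := ⟨hXM ha, ha⟩
        rw [he] at h1; exact h1
      · rintro ⟨u, _, hMX⟩
        have h1 : u ∈ M ∩ X := hMX ▸ rfl
        rw [he] at h1; exact h1
    · right; left
      have huMX : u ∈ M ∩ X := hu ▸ rfl
      have hnotsub : ¬ X ⊆ M := by
        intro hXM
        have h1 : a ∈ M ∩ X := ⟨hXM ha, ha⟩
        have h2 : b ∈ M ∩ X := ⟨hXM hb, hb⟩
        rw [hu] at h1 h2
        exact hab' (h1.trans h2.symm)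
      refine ⟨⟨u, ⟨huMX.2, hu, ?_⟩, ?_⟩, hnotsub, ?_⟩
      · intro v hvM hvu w hwX hwu
        have hwM : w ∉ M := by
          intro hwM
          have h1 : w ∈ M ∩ X := ⟨hwM, hwX⟩
          rw [hu] at h1; exact hwu h1
        rcases hM w hwM with h | h
        · exact ⟨fun _ => h v hvM, fun _ => h u huMX.1⟩
        · exact ⟨fun hx => absurd hx (h u huMX.1), fun hx => absurd hx (h v hvM)⟩
      · rintro y ⟨hyX, hyMX, _⟩
        have h1 : u ∈ ({y} : Set V) := hyMX ▸ huMX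
        exact h1.symm
      · intro h; rw [h] at huMX; exact huMX
end

section
/- For every finite graph G with m(G) ≥ 2 such that log₂(m(G)) is not an integer, p(G) = ⌈log₂(m(G))⌉. -/
/-- `M` is a clique: all distinct vertices of `M` are adjacent. -/
def IsCliqueSet {V : Type*} (G : SimpleGraph V) (M : Set V) : Prop :=
  ∀ a ∈ M, ∀ b ∈ M, a ≠ b → G.Adj a b

/-- `M` is a stable (independent) set. -/
def IsStableSet {V : Type*} (G : SimpleGraph V) (M : Set V) : Prop :=
  ∀ a ∈ M, ∀ b ∈ M, ¬ G.Adj a b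

/-- `G` admits a prime extension obtained by adding exactly `p` new vertices. -/
def HasPrimeExt {V : Type*} (G : SimpleGraph V) (p : ℕ) : Prop :=
  ∃ H : SimpleGraph (V ⊕ Fin p),
    (∀ a b : V, H.Adj (Sum.inl a) (Sum.inl b) ↔ G.Adj a b) ∧ IsPrimeGraph H

/-- The prime bound `p(G)`: the least number of added vertices in a prime extension. -/
noncomputable def primeBound {V : Type*} (G : SimpleGraph V) : ℕ :=
  sInf {p : ℕ | HasPrimeExt G p}

/-- `m(G)`: the largest cardinality of a module of `G` that is a clique or a stable set. -/
noncomputable def modCliqueStab {V : Type*} (G : SimpleGraph V) : ℕ :=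
  sSup {n : ℕ | ∃ M : Set V, IsModule G M ∧ (IsCliqueSet G M ∨ IsStableSet G M) ∧ M.ncard = n}

/-!
Lower bound: the vertices of a largest clique-or-stable module `B` are pairwise twins, so in a
prime extension any two of them are separated by a new vertex, whence `m(G) ≤ 2 ^ p`.

Upper bound: for `2 ^ (k - 1) < m(G) < 2 ^ k`, add `k` independent vertices and join each old
vertex `v` to a code `c v ⊆ Fin k`. Twin classes are clique-or-stable modules, so they have at most
`2 ^ k - 1` vertices and can be given pairwise distinct codes; a class uses an initial segment of a
fixed list of codes, so the largest class `B` realizes more than half of all codes, including the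
stars `{0, j}`, while `∅` and `univ` are only used in full classes. A nontrivial module of the
extension is then ruled out according to the new vertices it contains. For a module of `G` itself
one passes to a minimal one: it is either a pair of twins, separated by their codes, or twin-free,
and twin-free minimal modules are pairwise disjoint, so recoding one vertex in each of them breaks
them all at once.
-/
section

variable {V : Type*} {G : SimpleGraph V}

theorem isModule_iff_adj_iff {M : Set V} :
    IsModule G M ↔ ∀ v ∉ M, ∀ a ∈ M, ∀ b ∈ M, (G.Adj v a ↔ G.Adj v b) := by
  refine ⟨fun hM v hv a ha b hb => ?_, fun h v hv => ?_⟩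
  · rcases hM v hv with hall | hnone
    · exact iff_of_true (hall a ha) (hall b hb)
    · exact iff_of_false (hnone a ha) (hnone b hb)
  · by_cases hadj : ∃ a ∈ M, G.Adj v a
    · obtain ⟨a, ha, hva⟩ := hadj
      exact Or.inl fun b hb => (h v hv a ha b hb).1 hva
    · push Not at hadj
      exact Or.inr hadj

theorem IsModule.adj_iff_s16 {M : Set V} (hM : IsModule G M) {v a b : V} (hv : v ∉ M)
    (ha : a ∈ M) (hb : b ∈ M) : G.Adj v a ↔ G.Adj v b :=
  isModule_iff_adj_iff.1 hM v hv a ha b hb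

theorem IsModule.inter {M N : Set V} (hM : IsModule G M) (hN : IsModule G N) :
    IsModule G (M ∩ N) :=
  isModule_iff_adj_iff.2 fun v hv a ha b hb => by
    by_cases hvM : v ∈ M
    · exact hN.adj_iff_s16 (fun hvN => hv ⟨hvM, hvN⟩) ha.2 hb.2
    · exact hM.adj_iff_s16 hvM ha.1 hb.1

theorem IsModule.sdiff {M N : Set V} (hM : IsModule G M) (hN : IsModule G N) {y : V}
    (hyN : y ∈ N) (hyM : y ∉ M) : IsModule G (M \ N) :=
  isModule_iff_adj_iff.2 fun v hv a ha b hb => by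
    by_cases hvM : v ∈ M
    · have hvN : v ∈ N := not_not.1 fun hvN => hv ⟨hvM, hvN⟩
      rw [G.adj_comm v a, G.adj_comm v b, hN.adj_iff_s16 ha.2 hvN hyN, hN.adj_iff_s16 hb.2 hvN hyN,
        G.adj_comm a, G.adj_comm b]
      exact hM.adj_iff_s16 hyM ha.1 hb.1
    · exact hM.adj_iff_s16 hvM ha.1 hb.1

def AreTwins (G : SimpleGraph V) (a b : V) : Prop :=
  ∀ x, x ≠ a → x ≠ b → (G.Adj x a ↔ G.Adj x b)

theorem AreTwins.symm {a b : V} (h : AreTwins G a b) : AreTwins G b a :=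
  fun x hb ha => (h x ha hb).symm

theorem AreTwins.trans {a b c : V} (hab : AreTwins G a b) (hbc : AreTwins G b c) :
    AreTwins G a c := by
  intro x hxa hxc
  by_cases hxb : x = b
  · subst hxb
    by_cases hac : a = c
    · subst hac; rfl
    rw [G.adj_comm, hbc a (Ne.symm hxa) hac, G.adj_comm, hab c (Ne.symm hac) (Ne.symm hxc),
      G.adj_comm]
  · exact (hab x hxa hxb).trans (hbc x hxb hxc)

theorem isModule_pair_iff {a b : V} : IsModule G {a, b} ↔ AreTwins G a b := by
  simp only [isModule_iff_adj_iff, Set.mem_insert_iff, Set.mem_singleton_iff, not_or]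
  refine ⟨fun h x hxa hxb => h x ⟨hxa, hxb⟩ a (Or.inl rfl) b (Or.inr rfl), ?_⟩
  rintro h x ⟨hxa, hxb⟩ _ (rfl | rfl) _ (rfl | rfl)
  exacts [Iff.rfl, h x hxa hxb, (h x hxa hxb).symm, Iff.rfl]

theorem IsModule.areTwins {B : Set V} (hB : IsModule G B)
    (hBcs : IsCliqueSet G B ∨ IsStableSet G B) {a b : V} (ha : a ∈ B) (hb : b ∈ B) :
    AreTwins G a b := by
  intro x hxa hxb
  by_cases hx : x ∈ B
  · rcases hBcs with hcl | hst
    · exact iff_of_true (hcl x hx a ha hxa) (hcl x hx b hb hxb)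
    · exact iff_of_false (hst x hx a ha) (hst x hx b hb)
  · exact hB.adj_iff_s16 hx ha hb

def twinClass (G : SimpleGraph V) (v : V) : Set V := {u | AreTwins G u v}

theorem self_mem_twinClass (v : V) : v ∈ twinClass G v := fun _ _ _ => Iff.rfl

theorem twinClass_eq_of_mem {u v : V} (hu : u ∈ twinClass G v) :
    twinClass G u = twinClass G v :=
  Set.ext fun _ => ⟨fun h => h.trans hu, fun h => h.trans hu.symm⟩

def IsTwinFree (G : SimpleGraph V) (v : V) : Prop := ∀ x, AreTwins G v x → x = v

theorem twinClass_eq_singleton {v : V} (hv : IsTwinFree G v) : twinClass G v = {v} :=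
  Set.eq_singleton_iff_unique_mem.2 ⟨self_mem_twinClass v, fun x hx => hv x (AreTwins.symm hx)⟩

theorem areTwins_of_mem_twinClass {v a b : V} (ha : a ∈ twinClass G v) (hb : b ∈ twinClass G v) :
    AreTwins G a b :=
  AreTwins.trans ha hb.symm

theorem isModule_twinClass (v : V) : IsModule G (twinClass G v) :=
  isModule_iff_adj_iff.2 fun x hx _ ha _ hb =>
    areTwins_of_mem_twinClass ha hb x (fun h => hx (h ▸ ha)) fun h => hx (h ▸ hb)

theorem twinClass_isCliqueSet_or_isStableSet (v : V) :
    IsCliqueSet G (twinClass G v) ∨ IsStableSet G (twinClass G v) := by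
  set C := twinClass G v
  have hspread : ∀ {a b b'}, a ∈ C → b ∈ C → b' ∈ C → a ≠ b' → G.Adj a b → G.Adj a b' := by
    intro a b b' _ hb hb' hab' hab
    by_cases hbb' : b = b'
    · exact hbb' ▸ hab
    · exact (areTwins_of_mem_twinClass hb hb' a hab.ne hab').1 hab
  by_cases h : ∃ x ∈ C, ∃ y ∈ C, G.Adj x y
  · obtain ⟨x, hx, y, hy, hxy⟩ := h
    have hx' : ∀ z ∈ C, z ≠ x → G.Adj x z := fun z hz hzx => hspread hx hy hz (Ne.symm hzx) hxy
    refine Or.inl fun a ha b hb hab => ?_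
    by_cases hax : a = x
    · exact hax ▸ hx' b hb (hax ▸ Ne.symm hab)
    · exact hspread ha hx hb hab (hx' a ha hax).symm
  · push Not at h
    exact Or.inr h

abbrev IsNontrivialModule (G : SimpleGraph V) (M : Set V) : Prop := IsModule G M ∧ M.Nontrivial

section Finite

variable [Finite V]

theorem IsModule.exists_minimal {A : Set V} (hA : IsModule G A) (hA2 : A.Nontrivial) :
    ∃ M ⊆ A, Minimal (IsNontrivialModule G) M :=
  exists_minimal_le_of_wellFoundedLT _ A ⟨hA, hA2⟩

theorem Minimal.not_isModule_sdiff_singleton {M : Set V}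
    (hM : Minimal (IsNontrivialModule G) M) (h3 : 2 < M.ncard) {z : V} (hz : z ∈ M) :
    ¬ IsModule G (M \ {z}) := fun hdiff => by
  have hnt : (M \ {z}).Nontrivial := by
    rw [← Set.one_lt_ncard_iff_nontrivial, Set.ncard_sdiff_singleton_of_mem hz]
    omega
  have hzz : z ∈ M \ {z} := by
    rw [hM.eq_of_subset ⟨hdiff, hnt⟩ Set.sdiff_subset]
    exact hz
  exact hzz.2 rfl

theorem Minimal.isTwinFree {M : Set V} (hM : Minimal (IsNontrivialModule G) M)
    (h3 : 2 < M.ncard) {x : V} (hx : x ∈ M) : IsTwinFree G x := by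
  intro y hxy
  by_contra hyx
  by_cases hy : y ∈ M
  · have hpair := hM.eq_of_subset ⟨isModule_pair_iff.2 hxy, Set.nontrivial_pair (Ne.symm hyx)⟩
      (Set.pair_subset hx hy)
    rw [← hpair, Set.ncard_pair (Ne.symm hyx)] at h3
    omega
  · have hdiff : M \ {y, x} = M \ {x} := by
      ext w
      simp only [Set.mem_sdiff, Set.mem_insert_iff, Set.mem_singleton_iff, not_or]
      exact ⟨fun h => ⟨h.1, h.2.2⟩, fun h => ⟨h.1, fun hwy => hy (hwy ▸ h.1), h.2⟩⟩
    exact hM.not_isModule_sdiff_singleton h3 hx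
      (hdiff ▸ hM.prop.1.sdiff (isModule_pair_iff.2 hxy.symm) (Set.mem_insert y _) hy)

theorem Minimal.eq_of_mem_of_mem {M N : Set V} (hM : Minimal (IsNontrivialModule G) M)
    (hN : Minimal (IsNontrivialModule G) N) (h3 : 2 < M.ncard) {z : V} (hzM : z ∈ M)
    (hzN : z ∈ N) : M = N := by
  by_contra hMN
  have hint := hM.prop.1.inter hN.prop.1
  have hsub : (M ∩ N).Subsingleton := Set.not_nontrivial_iff.1 fun hnt =>
    hMN ((hM.eq_of_subset ⟨hint, hnt⟩ Set.inter_subset_left).symm.trans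
      (hN.eq_of_subset ⟨hint, hnt⟩ Set.inter_subset_right))
  obtain ⟨y, hyN, hyM⟩ := Set.not_subset.1 fun h => hMN (hM.eq_of_subset hN.prop h).symm
  have hdiff : M \ N = M \ {z} := by
    ext x
    simp only [Set.mem_sdiff, Set.mem_singleton_iff, and_congr_right_iff]
    exact fun hx => ⟨fun hxN hxz => hxN (hxz ▸ hzN),
      fun hxz hxN => hxz (hsub ⟨hx, hxN⟩ ⟨hzM, hzN⟩)⟩
  exact hM.not_isModule_sdiff_singleton h3 hzM (hdiff ▸ hM.prop.1.sdiff hN.prop.1 hyN hyM)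

/-- Minimal modules with more than two vertices are pairwise disjoint, so they have a common
transversal meeting each of them in a single vertex. -/
theorem exists_transversal (G : SimpleGraph V) :
    ∃ R : Set V, (∀ r ∈ R, IsTwinFree G r) ∧
      ∀ M, Minimal (IsNontrivialModule G) M → 2 < M.ncard → (∃ r ∈ M, r ∈ R) ∧ ∃ u ∈ M, u ∉ R := by
  let rep : {M // Minimal (IsNontrivialModule G) M ∧ 2 < M.ncard} → V :=
    fun M => M.2.1.prop.2.nonempty.some
  have hrep : ∀ M, rep M ∈ M.1 := fun M => M.2.1.prop.2.nonempty.some_mem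
  refine ⟨Set.range rep, ?_, fun M hM h3 => ⟨⟨_, hrep ⟨M, hM, h3⟩, _, rfl⟩, ?_⟩⟩
  · rintro _ ⟨M, rfl⟩
    exact M.2.1.isTwinFree M.2.2 (hrep M)
  · obtain ⟨u, huM, hur⟩ := hM.prop.2.exists_ne (rep ⟨M, hM, h3⟩)
    refine ⟨u, huM, fun ⟨N, hN⟩ => hur ?_⟩
    have hNM : N.1 = M := N.2.1.eq_of_mem_of_mem hM N.2.2 (hN ▸ hrep N) huM
    rw [← hN, show N = ⟨M, hM, h3⟩ from Subtype.ext hNM]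

theorem IsModule.subsingleton_of_forall_eq {α : Type*} {φ : V → α}
    (htw : ∀ a b, a ≠ b → AreTwins G a b → φ a ≠ φ b)
    (hmin : ∀ M, Minimal (IsNontrivialModule G) M → 2 < M.ncard → ∃ x ∈ M, ∃ y ∈ M, φ x ≠ φ y)
    {A : Set V} (hA : IsModule G A) (hφ : ∀ x ∈ A, ∀ y ∈ A, φ x = φ y) : A.Subsingleton := by
  by_contra hnt
  obtain ⟨M, hMA, hM⟩ := hA.exists_minimal (Set.not_subsingleton_iff.1 hnt)
  by_cases h3 : 2 < M.ncard
  · obtain ⟨x, hx, y, hy, hxy⟩ := hmin M hM h3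
    exact hxy (hφ x (hMA hx) y (hMA hy))
  · obtain ⟨a, b, hab, rfl⟩ := Set.ncard_eq_two.1
      (le_antisymm (not_lt.1 h3) (Set.one_lt_ncard_iff_nontrivial.2 hM.prop.2))
    exact htw a b hab (isModule_pair_iff.1 hM.prop.1)
      (hφ a (hMA (Set.mem_insert a _)) b (hMA (Set.mem_insert_of_mem a rfl)))

theorem Set.InjOn.exists_notMem_of_ncard_lt {α β : Type*} [Finite β] {f : α → β} {s : Set α}
    {t : Set β} (hf : Set.InjOn f s) (h : t.ncard < s.ncard) : ∃ a ∈ s, f a ∉ t := by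
  obtain ⟨_, ⟨a, ha, rfl⟩, hat⟩ :=
    Set.exists_mem_notMem_of_ncard_lt_ncard (h.trans_eq hf.ncard_image.symm)
  exact ⟨a, ha, hat⟩

theorem bddAbove_cliqueStableModule_ncard (G : SimpleGraph V) :
    BddAbove {n : ℕ | ∃ M : Set V, IsModule G M ∧ (IsCliqueSet G M ∨ IsStableSet G M) ∧
      M.ncard = n} :=
  ⟨Nat.card V, by rintro _ ⟨M, -, -, rfl⟩; exact Set.ncard_le_card M⟩

theorem ncard_le_modCliqueStab {B : Set V} (hB : IsModule G B)
    (hBcs : IsCliqueSet G B ∨ IsStableSet G B) : B.ncard ≤ modCliqueStab G :=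
  le_csSup (bddAbove_cliqueStableModule_ncard G) ⟨B, hB, hBcs, rfl⟩

theorem exists_ncard_eq_modCliqueStab (G : SimpleGraph V) :
    ∃ B, IsModule G B ∧ (IsCliqueSet G B ∨ IsStableSet G B) ∧ B.ncard = modCliqueStab G := by
  refine Nat.sSup_mem ?_ (bddAbove_cliqueStableModule_ncard G)
  exact ⟨0, ∅, fun _ _ => Or.inl fun _ h => h.elim, Or.inl fun _ h => h.elim, Set.ncard_empty V⟩

theorem ncard_twinClass_le (v : V) : (twinClass G v).ncard ≤ modCliqueStab G :=
  ncard_le_modCliqueStab (isModule_twinClass v) (twinClass_isCliqueSet_or_isStableSet v)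

theorem twinClass_eq_of_ncard_eq_modCliqueStab {B : Set V} (hB : IsModule G B)
    (hBcs : IsCliqueSet G B ∨ IsStableSet G B) (hBm : B.ncard = modCliqueStab G) {v : V}
    (hv : v ∈ B) : twinClass G v = B :=
  (Set.eq_of_subset_of_ncard_le (fun _ hu => hB.areTwins hBcs hu hv)
    (hBm ▸ ncard_twinClass_le v)).symm

open Classical in
noncomputable def indexIn (s : Set V) (x : V) : ℕ :=
  if h : x ∈ s then Finite.equivFin s ⟨x, h⟩ else 0

theorem indexIn_lt {s : Set V} {x : V} (hx : x ∈ s) : indexIn s x < s.ncard := by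
  rw [indexIn, dif_pos hx]
  exact Fin.is_lt _

theorem indexIn_injOn (s : Set V) : Set.InjOn (indexIn s) s := by
  intro x hx y hy h
  rw [indexIn, indexIn, dif_pos hx, dif_pos hy] at h
  exact congrArg Subtype.val ((Finite.equivFin s).injective (Fin.ext h))

theorem exists_indexIn_eq {s : Set V} {j : ℕ} (hj : j < s.ncard) : ∃ x ∈ s, indexIn s x = j := by
  let x := (Finite.equivFin s).symm ⟨j, hj⟩
  refine ⟨x, x.2, ?_⟩
  rw [indexIn, dif_pos x.2, Subtype.coe_eta, Equiv.apply_symm_apply]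

end Finite

def extGraph (G : SimpleGraph V) {k : ℕ} (c : V → Finset (Fin k)) :
    SimpleGraph (V ⊕ Fin k) where
  Adj
    | .inl a, .inl b => G.Adj a b
    | .inl a, .inr i => i ∈ c a
    | .inr i, .inl a => i ∈ c a
    | .inr _, .inr _ => False
  symm := ⟨by rintro (a | i) (b | j) h <;> first | exact h.symm | exact h⟩
  loopless := ⟨by rintro (a | i) h; exacts [G.loopless.irrefl a h, h]⟩

section Criterion

variable {k : ℕ} {c : V → Finset (Fin k)}

structure IsPrimeCoding (G : SimpleGraph V) (c : V → Finset (Fin k)) : Prop where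
  subsingleton_of_isModule :
    ∀ A, IsModule G A → (∀ x ∈ A, ∀ y ∈ A, c x = c y) → A.Subsingleton
  exists_crossing : ∀ I : Set (Fin k), I.Nontrivial → ∀ j ∉ I,
    ∃ u, (∃ i ∈ I, i ∈ c u) ∧ (∃ j ∉ I, j ∈ c u) ∧ ∃ i ∈ I, i ∉ c u
  exists_adj_of_eq_empty : ∀ u, c u = ∅ → ∀ i, ∃ y, G.Adj u y ∧ i ∉ c y ∧ c y ≠ ∅
  exists_not_adj_of_eq_univ : ∀ u, c u = Finset.univ →
    ∃ y, y ≠ u ∧ ¬ G.Adj u y ∧ c y ≠ ∅ ∧ c y ≠ Finset.univ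
  exists_ne_of_eq_singleton : ∀ a i, c a = {i} → ∃ v, v ≠ a ∧ ¬ (G.Adj v a ↔ i ∈ c v)

variable {M : Set (V ⊕ Fin k)}

theorem IsModule.preimage_inl (hM : IsModule (extGraph G c) M) : IsModule G (Sum.inl ⁻¹' M) :=
  isModule_iff_adj_iff.2 fun _ hv _ ha _ hb => hM.adj_iff_s16 hv ha hb

theorem IsModule.inr_mem_of_mem_code (hM : IsModule (extGraph G c) M) {i j : Fin k} {v : V}
    (hi : .inr i ∈ M) (hv : .inl v ∈ M) (hj : j ∈ c v) : .inr j ∈ M := by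
  by_contra hjM
  exact (hM.adj_iff_s16 hjM hv hi).1 hj

theorem IsModule.inl_notMem_cases (hM : IsModule (extGraph G c) M) {u : V} (hu : .inl u ∉ M) :
    ((∀ i, .inr i ∈ M → i ∈ c u) ∧ ∀ a, .inl a ∈ M → G.Adj u a) ∨
      ((∀ i, .inr i ∈ M → i ∉ c u) ∧ ∀ a, .inl a ∈ M → ¬ G.Adj u a) :=
  (hM _ hu).imp (fun h => ⟨fun _ hi => h _ hi, fun _ ha => h _ ha⟩)
    fun h => ⟨fun _ hi => h _ hi, fun _ ha => h _ ha⟩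

namespace IsPrimeCoding

variable (hc : IsPrimeCoding G c) (hM : IsModule (extGraph G c) M)
include hc hM

theorem subsingleton_of_preimage_inr_eq_empty (hI : Sum.inr ⁻¹' M = ∅) : M.Subsingleton := by
  have hIM : ∀ i, .inr i ∉ M := fun i hi => (hI ▸ hi : i ∈ (∅ : Set (Fin k)))
  have hA := hc.subsingleton_of_isModule _ hM.preimage_inl fun x hx y hy =>
    Finset.ext fun i => hM.adj_iff_s16 (hIM i) hx hy
  rintro (x | i) hx (y | j) hy
  · exact congrArg Sum.inl (hA hx hy)
  all_goals exact (hIM _ ‹_›).elim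

theorem eq_univ_of_preimage_inr_eq_univ [NeZero k] (hI : Sum.inr ⁻¹' M = Set.univ) :
    M = Set.univ := by
  have hIM : ∀ i, .inr i ∈ M := fun i => (hI.symm ▸ Set.mem_univ i : i ∈ Sum.inr ⁻¹' M)
  have hproper : ∀ y, c y ≠ ∅ → c y ≠ Finset.univ → .inl y ∈ M := by
    intro y hy0 hy1
    by_contra hyM
    rcases hM.inl_notMem_cases hyM with ⟨h, -⟩ | ⟨h, -⟩
    · exact hy1 (Finset.eq_univ_of_forall fun i => h i (hIM i))
    · exact hy0 (Finset.eq_empty_of_forall_notMem fun i => h i (hIM i))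
  have hA : ∀ u, .inl u ∈ M := by
    intro u
    by_contra hu
    rcases hM.inl_notMem_cases hu with ⟨h, hadj⟩ | ⟨h, hadj⟩
    · obtain ⟨y, -, hnadj, hy0, hy1⟩ :=
        hc.exists_not_adj_of_eq_univ u (Finset.eq_univ_of_forall fun i => h i (hIM i))
      exact hnadj (hadj y (hproper y hy0 hy1))
    · obtain ⟨y, huy, hy, hy0⟩ :=
        hc.exists_adj_of_eq_empty u (Finset.eq_empty_of_forall_notMem fun i => h i (hIM i)) 0
      exact hadj y (hproper y hy0 fun h => hy (h ▸ Finset.mem_univ 0)) huy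
  exact Set.eq_univ_of_forall fun | .inl u => hA u | .inr i => hIM i

theorem not_nontrivial_preimage_inr {j : Fin k} (hj : .inr j ∉ M) :
    ¬ (Sum.inr ⁻¹' M).Nontrivial := fun hI => by
  obtain ⟨u, ⟨i, hiI, hiu⟩, ⟨j', hj'I, hj'u⟩, ⟨i', hi'I, hi'u⟩⟩ := hc.exists_crossing _ hI j hj
  have hu : .inl u ∉ M := fun hu => hj'I (hM.inr_mem_of_mem_code hiI hu hj'u)
  rcases hM.inl_notMem_cases hu with ⟨h, -⟩ | ⟨h, -⟩
  · exact hi'u (h i' hi'I)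
  · exact h i hiI hiu

theorem subsingleton_of_preimage_inr_eq_singleton {i : Fin k} (hI : Sum.inr ⁻¹' M = {i}) :
    M.Subsingleton := by
  have hIM : ∀ j, .inr j ∈ M ↔ j = i := fun j => Set.ext_iff.1 hI j
  have hiM : .inr i ∈ M := (hIM i).2 rfl
  have hsub : ∀ x, .inl x ∈ M → c x ⊆ {i} := fun x hx j hj =>
    Finset.mem_singleton.2 ((hIM j).1 (hM.inr_mem_of_mem_code hiM hx hj))
  have hcode : ∀ x, .inl x ∈ M → c x = {i} := by
    intro x hx
    refine (Finset.subset_singleton_iff.1 (hsub x hx)).resolve_left fun hx0 => ?_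
    obtain ⟨y, hxy, hiy, hy0⟩ := hc.exists_adj_of_eq_empty x hx0 i
    have hy : .inl y ∉ M := fun hy => hiy <|
      (Finset.subset_singleton_iff.1 (hsub y hy)).resolve_left hy0 ▸ Finset.mem_singleton_self i
    rcases hM.inl_notMem_cases hy with ⟨h, -⟩ | ⟨-, h⟩
    · exact hiy (h i hiM)
    · exact h x hx hxy.symm
  have hA := hc.subsingleton_of_isModule _ hM.preimage_inl fun x hx y hy =>
    (hcode x hx).trans (hcode y hy).symm
  by_cases hAe : ∃ a, .inl a ∈ M
  · obtain ⟨a, ha⟩ := hAe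
    obtain ⟨v, hva, hv⟩ := hc.exists_ne_of_eq_singleton a i (hcode a ha)
    have hvM : .inl v ∉ M := fun h => hva (hA h ha)
    rcases hM.inl_notMem_cases hvM with ⟨h1, h2⟩ | ⟨h1, h2⟩
    · exact (hv (iff_of_true (h2 a ha) (h1 i hiM))).elim
    · exact (hv (iff_of_false (h2 a ha) (h1 i hiM))).elim
  · push Not at hAe
    rintro (x | j) hx (y | j') hy
    · exact (hAe x hx).elim
    · exact (hAe x hx).elim
    · exact (hAe y hy).elim
    · rw [(hIM j).1 hx, (hIM j').1 hy]

end IsPrimeCoding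

theorem IsPrimeCoding.isPrimeGraph [Finite V] [NeZero k] (hc : IsPrimeCoding G c)
    (hcard : 4 ≤ Nat.card V + k) : IsPrimeGraph (extGraph G c) := by
  refine ⟨by simpa [Nat.card_sum] using hcard, fun M hM => ?_⟩
  rcases (Sum.inr ⁻¹' M).eq_empty_or_nonempty with hI | hI
  · exact Or.inr (hc.subsingleton_of_preimage_inr_eq_empty hM hI)
  by_cases hIu : Sum.inr ⁻¹' M = Set.univ
  · exact Or.inl (hc.eq_univ_of_preimage_inr_eq_univ hM hIu)
  obtain ⟨j, hj⟩ := (Set.ne_univ_iff_exists_notMem _).1 hIu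
  rcases hI.exists_eq_singleton_or_nontrivial with ⟨i, hi⟩ | hnt
  · exact Or.inr (hc.subsingleton_of_preimage_inr_eq_singleton hM hi)
  · exact (hc.not_nontrivial_preimage_inr hM hj hnt).elim

end Criterion

section Codes

open Finset

variable {k : ℕ}

variable (k) in
def properCodes : Finset (Finset (Fin k)) := (univ.erase ∅).erase univ

theorem mem_properCodes {S : Finset (Fin k)} : S ∈ properCodes k ↔ S ≠ ∅ ∧ S ≠ univ := by
  simp [properCodes, and_comm]

theorem ncard_setOf_notMem_le (i : Fin k) : {S : Finset (Fin k) | i ∉ S}.ncard ≤ 2 ^ (k - 1) :=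
  calc {S : Finset (Fin k) | i ∉ S}.ncard ≤ (↑(univ.erase i).powerset : Set _).ncard :=
        Set.ncard_le_ncard fun S hS => by
          rw [mem_coe, mem_powerset, subset_erase]
          exact ⟨subset_univ S, hS⟩
    _ = 2 ^ (k - 1) := by
        rw [Set.ncard_coe_finset, card_powerset, card_erase_of_mem (mem_univ _), card_univ,
          Fintype.card_fin]

theorem ncard_setOf_mem_le (i : Fin k) : {S : Finset (Fin k) | i ∈ S}.ncard ≤ 2 ^ (k - 1) :=
  calc {S : Finset (Fin k) | i ∈ S}.ncard ≤ (insert i '' {S : Finset (Fin k) | i ∉ S}).ncard :=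
        Set.ncard_le_ncard fun S hS => ⟨S.erase i, notMem_erase i S, insert_erase hS⟩
    _ ≤ 2 ^ (k - 1) := le_trans Set.ncard_image_le (ncard_setOf_notMem_le i)

theorem ncard_setOf_nonempty_notMem_lt (i : Fin k) :
    {S : Finset (Fin k) | S.Nonempty ∧ i ∉ S}.ncard < 2 ^ (k - 1) := by
  refine lt_of_lt_of_le (Set.ncard_lt_ncard ⟨fun _ hS => hS.2, fun h => ?_⟩)
    (ncard_setOf_notMem_le i)
  exact Finset.not_nonempty_empty (h (show (∅ : Finset (Fin k)) ∈ {S | i ∉ S} from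
    notMem_empty i)).1

variable [NeZero k]

variable (k) in
def starCodes : Finset (Finset (Fin k)) := ((univ.erase 0).image fun j => {0, j}).erase univ

variable (k) in
noncomputable def codeBody : List (Finset (Fin k)) :=
  (starCodes k).toList ++ (properCodes k \ starCodes k).toList

variable (k) in
/-- Twin classes take their codes from initial segments of `codeList k e`: the star codes come
first, so that every large class realizes all of them, and the extra code `e ∈ {∅, univ}` comes
last, so that only a class with `2 ^ k - 1` vertices uses it. -/
noncomputable def codeList (e : Finset (Fin k)) : List (Finset (Fin k)) := codeBody k ++ [e]

theorem card_properCodes : #(properCodes k) = 2 ^ k - 2 := by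
  rw [properCodes, card_erase_of_mem (mem_erase.2 ⟨univ_nonempty.ne_empty, mem_univ _⟩),
    card_erase_of_mem (mem_univ _), card_univ, Fintype.card_finset, Fintype.card_fin]
  omega

theorem pair_mem_starCodes {j : Fin k} (hj : j ≠ 0) (hS : ({0, j} : Finset (Fin k)) ≠ univ) :
    {0, j} ∈ starCodes k :=
  mem_erase.2 ⟨hS, mem_image.2 ⟨j, mem_erase.2 ⟨hj, mem_univ j⟩, rfl⟩⟩

theorem starCodes_subset_properCodes : starCodes k ⊆ properCodes k := by
  intro S hS
  obtain ⟨hSu, hS⟩ := mem_erase.1 hS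
  obtain ⟨j, -, rfl⟩ := mem_image.1 hS
  exact mem_properCodes.2 ⟨insert_ne_empty _ _, hSu⟩

theorem card_starCodes_lt : #(starCodes k) < k :=
  calc #(starCodes k) ≤ #((univ.erase 0).image fun j : Fin k => ({0, j} : Finset (Fin k))) :=
        card_erase_le
    _ ≤ #(univ.erase (0 : Fin k)) := card_image_le
    _ < k := by
        rw [card_erase_of_mem (mem_univ _), card_univ, Fintype.card_fin]
        exact Nat.sub_lt (NeZero.pos k) one_pos

theorem exists_starCode_crossing {I : Set (Fin k)} (hI : I.Nontrivial) {j : Fin k} (hj : j ∉ I) :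
    ∃ S ∈ starCodes k, (∃ i ∈ I, i ∈ S) ∧ (∃ j ∉ I, j ∈ S) ∧ ∃ i ∈ I, i ∉ S := by
  by_cases h0 : (0 : Fin k) ∈ I
  · obtain ⟨i, hi, hi0⟩ := hI.exists_ne 0
    have hiS : i ∉ ({0, j} : Finset (Fin k)) := by
      simp only [mem_insert, mem_singleton, not_or]
      exact ⟨hi0, fun h => hj (h ▸ hi)⟩
    refine ⟨{0, j}, pair_mem_starCodes (fun h => hj (h ▸ h0)) fun h => hiS (h ▸ mem_univ i),
      ⟨0, h0, by simp⟩, ⟨j, hj, by simp⟩, i, hi, hiS⟩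
  · obtain ⟨i, hi⟩ := hI.nonempty
    obtain ⟨i', hi', hi'i⟩ := hI.exists_ne i
    have hi'S : i' ∉ ({0, i} : Finset (Fin k)) := by
      simp only [mem_insert, mem_singleton, not_or]
      exact ⟨fun h => h0 (h ▸ hi'), hi'i⟩
    refine ⟨{0, i}, pair_mem_starCodes (fun h => h0 (h ▸ hi)) fun h => hi'S (h ▸ mem_univ i'),
      ⟨i, hi, by simp⟩, ⟨0, h0, by simp⟩, i', hi', hi'S⟩

theorem mem_codeBody {S : Finset (Fin k)} : S ∈ codeBody k ↔ S ∈ properCodes k := by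
  by_cases h : S ∈ starCodes k
  · simp [codeBody, h, starCodes_subset_properCodes h]
  · simp [codeBody, h]

theorem length_codeBody : (codeBody k).length = 2 ^ k - 2 := by
  have hsub := card_le_card (starCodes_subset_properCodes (k := k))
  rw [card_properCodes] at hsub
  simp only [codeBody, List.length_append, length_toList,
    card_sdiff_of_subset starCodes_subset_properCodes, card_properCodes]
  omega

theorem nodup_codeBody : (codeBody k).Nodup :=
  List.nodup_append.2 ⟨nodup_toList _, nodup_toList _, fun _ ha _ hb hab =>
    (mem_sdiff.1 (mem_toList.1 hb)).2 (hab ▸ mem_toList.1 ha)⟩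

theorem length_codeList (e : Finset (Fin k)) : (codeList k e).length = 2 ^ k - 1 := by
  have h2 : 2 ≤ 2 ^ k := Nat.le_self_pow (NeZero.ne k) 2
  rw [codeList, List.length_append, length_codeBody, List.length_singleton]
  omega

theorem getD_codeList_of_lt (e : Finset (Fin k)) {j : ℕ} (hj : j < 2 ^ k - 2) :
    (codeList k e).getD j ∅ ∈ properCodes k := by
  rw [← length_codeBody] at hj
  rw [codeList, List.getD_append _ _ _ _ hj, List.getD_eq_getElem _ _ hj, ← mem_codeBody]
  exact List.getElem_mem hj

theorem getD_codeList_two_pow_sub_two (e : Finset (Fin k)) :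
    (codeList k e).getD (2 ^ k - 2) ∅ = e := by
  rw [codeList, List.getD_append_right _ _ _ _ length_codeBody.le, length_codeBody, Nat.sub_self]
  rfl

theorem exists_getD_codeList_eq (e : Finset (Fin k)) {S : Finset (Fin k)}
    (hS : S ∈ properCodes k) : ∃ j < 2 ^ k - 2, (codeList k e).getD j ∅ = S := by
  obtain ⟨j, hj, rfl⟩ := List.mem_iff_getElem.1 (mem_codeBody.2 hS)
  refine ⟨j, length_codeBody (k := k) ▸ hj, ?_⟩
  rw [codeList, List.getD_append _ _ _ _ hj, List.getD_eq_getElem]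

theorem exists_getD_codeList_eq_of_mem_starCodes (e : Finset (Fin k)) {S : Finset (Fin k)}
    (hS : S ∈ starCodes k) : ∃ j < #(starCodes k), (codeList k e).getD j ∅ = S := by
  obtain ⟨j, hj, rfl⟩ := List.mem_iff_getElem.1 (mem_toList.2 hS)
  have hj' : j < (codeBody k).length := by
    rw [codeBody, List.length_append]
    omega
  refine ⟨j, by simpa using hj, ?_⟩
  rw [codeList, List.getD_append _ _ _ _ hj', codeBody, List.getD_append _ _ _ _ hj,
    List.getD_eq_getElem]

theorem getD_codeList_injOn {e : Finset (Fin k)} (he : e ∉ properCodes k) :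
    Set.InjOn (fun j => (codeList k e).getD j ∅) (Set.Iio (2 ^ k - 1)) := by
  have hnd : (codeList k e).Nodup :=
    List.nodup_append.2 ⟨nodup_codeBody, List.nodup_singleton e, fun a ha b hb hab =>
      he (List.mem_singleton.1 hb ▸ hab ▸ mem_codeBody.1 ha)⟩
  intro i hi j hj hij
  rw [Set.mem_Iio, ← length_codeList e] at hi hj
  simp only [List.getD_eq_getElem _ _ hi, List.getD_eq_getElem _ _ hj] at hij
  exact hnd.getElem_inj_iff.1 hij

end Codes

section Construction

variable {k : ℕ}

variable (G) in
open Classical in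
/-- The vertex of a full class that receives this code is adjacent (clique) or non-adjacent
(stable set) to the other vertices of its class, which carry proper codes. -/
noncomputable def extraCode (v : V) : Finset (Fin k) :=
  if IsCliqueSet G (twinClass G v) then ∅ else Finset.univ

theorem extraCode_notMem_properCodes (v : V) : extraCode G v ∉ properCodes k := by
  unfold extraCode
  split_ifs <;> simp [mem_properCodes]

variable {R : Set V}

theorem notMem_of_mem_twinClass (hR : ∀ r ∈ R, IsTwinFree G r) {v u : V}
    (hC : (twinClass G v).Nontrivial) (hu : u ∈ twinClass G v) : u ∉ R := fun huR => by
  rw [← twinClass_eq_of_mem hu, twinClass_eq_singleton (hR u huR)] at hC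
  exact Set.not_nontrivial_singleton hC

variable [Finite V] [NeZero k]

variable (G k) in
open Classical in
/-- A vertex of the transversal `R` has no twin and takes the code at position `1` instead of
`0`, so that no minimal module with more than two vertices is monochromatic. -/
noncomputable def primeCode (R : Set V) (v : V) : Finset (Fin k) :=
  (codeList k (extraCode G v)).getD (if v ∈ R then 1 else indexIn (twinClass G v) v) ∅

open Classical in
theorem primeCode_of_isTwinFree {v : V} (hv : IsTwinFree G v) :
    primeCode G k R v = (codeList k ∅).getD (if v ∈ R then 1 else 0) ∅ := by
  have hcl : IsCliqueSet G (twinClass G v) := by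
    rw [twinClass_eq_singleton hv]
    exact fun a ha b hb hab => (hab (ha.trans hb.symm)).elim
  have hidx : indexIn (twinClass G v) v = 0 := by
    have := indexIn_lt (self_mem_twinClass (G := G) v)
    rw [twinClass_eq_singleton hv] at this ⊢
    rw [Set.ncard_singleton] at this
    omega
  rw [primeCode, extraCode, if_pos hcl, hidx]

omit [NeZero k] in
theorem nontrivial_twinClass_of_two_pow_lt {v : V} (hbig : 2 ^ (k - 1) < (twinClass G v).ncard) :
    (twinClass G v).Nontrivial :=
  Set.one_lt_ncard_iff_nontrivial.1 (Nat.one_le_two_pow.trans_lt hbig)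

theorem primeCode_of_mem_twinClass (hR : ∀ r ∈ R, IsTwinFree G r) {v u : V}
    (hC : (twinClass G v).Nontrivial) (hu : u ∈ twinClass G v) :
    primeCode G k R u = (codeList k (extraCode G v)).getD (indexIn (twinClass G v) u) ∅ := by
  rw [primeCode, if_neg (notMem_of_mem_twinClass hR hC hu), extraCode, extraCode,
    twinClass_eq_of_mem hu]

theorem exists_primeCode_eq_getD (hR : ∀ r ∈ R, IsTwinFree G r) {v : V}
    (hC : (twinClass G v).Nontrivial) {j : ℕ} (hj : j < (twinClass G v).ncard) :
    ∃ u ∈ twinClass G v, primeCode G k R u = (codeList k (extraCode G v)).getD j ∅ := by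
  obtain ⟨u, hu, rfl⟩ := exists_indexIn_eq hj
  exact ⟨u, hu, primeCode_of_mem_twinClass hR hC hu⟩

theorem primeCode_injOn (hR : ∀ r ∈ R, IsTwinFree G r)
    (hmk : modCliqueStab G < 2 ^ k) {v : V} (hC : (twinClass G v).Nontrivial) :
    Set.InjOn (primeCode G k R) (twinClass G v) := by
  have hlt : ∀ x ∈ twinClass G v, indexIn (twinClass G v) x ∈ Set.Iio (2 ^ k - 1) :=
    fun x hx => by
      have := indexIn_lt hx
      have := ncard_twinClass_le (G := G) v
      exact Set.mem_Iio.2 (by omega)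
  intro a ha b hb hab
  rw [primeCode_of_mem_twinClass hR hC ha, primeCode_of_mem_twinClass hR hC hb] at hab
  exact indexIn_injOn _ ha hb
    (getD_codeList_injOn (extraCode_notMem_properCodes v) (hlt a ha) (hlt b hb) hab)

theorem primeCode_mem_properCodes_or (hmk : modCliqueStab G < 2 ^ k) (hk : 2 ≤ k) (v : V) :
    primeCode G k R v ∈ properCodes k ∨
      primeCode G k R v = extraCode G v ∧ 2 ^ k - 1 ≤ (twinClass G v).ncard := by
  have h4 : 4 ≤ 2 ^ k := Nat.pow_le_pow_right two_pos hk
  by_cases hv : v ∈ R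
  · rw [primeCode, if_pos hv]
    exact Or.inl (getD_codeList_of_lt _ (by omega))
  rw [primeCode, if_neg hv]
  have hlt := indexIn_lt (self_mem_twinClass (G := G) v)
  have hle := ncard_twinClass_le (G := G) v
  rcases lt_or_ge (indexIn (twinClass G v) v) (2 ^ k - 2) with h | h
  · exact Or.inl (getD_codeList_of_lt _ h)
  · rw [show indexIn (twinClass G v) v = 2 ^ k - 2 by omega, getD_codeList_two_pow_sub_two]
    exact Or.inr ⟨rfl, by omega⟩

theorem primeCode_ne_empty (hmk : modCliqueStab G < 2 ^ k) (hk : 2 ≤ k) {v : V}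
    (hcl : ¬ IsCliqueSet G (twinClass G v)) : primeCode G k R v ≠ ∅ := by
  rcases primeCode_mem_properCodes_or hmk hk v with h | ⟨h, -⟩
  · exact (mem_properCodes.1 h).1
  · rw [h, extraCode, if_neg hcl]
    exact Finset.univ_nonempty.ne_empty

theorem primeCode_exists_adj_of_eq_empty (hR : ∀ r ∈ R, IsTwinFree G r)
    (hmk : modCliqueStab G < 2 ^ k) (hk : 2 ≤ k) {u : V} (hu : primeCode G k R u = ∅) (i : Fin k) :
    ∃ y, G.Adj u y ∧ i ∉ primeCode G k R y ∧ primeCode G k R y ≠ ∅ := by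
  have hcl : IsCliqueSet G (twinClass G u) := not_not.1 fun hcl => primeCode_ne_empty hmk hk hcl hu
  rcases primeCode_mem_properCodes_or hmk hk u with h | ⟨-, hcard⟩
  · exact ((mem_properCodes.1 (hu ▸ h)).1 rfl).elim
  have h4 : 4 ≤ 2 ^ k := Nat.pow_le_pow_right two_pos hk
  have hC : (twinClass G u).Nontrivial := Set.one_lt_ncard_iff_nontrivial.1 (by omega)
  obtain ⟨j, hji⟩ : ∃ j : Fin k, j ≠ i := by
    have : Nontrivial (Fin k) := Fin.nontrivial_iff_two_le.2 hk
    exact exists_ne i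
  have hj : {j} ∈ properCodes k := mem_properCodes.2 ⟨Finset.singleton_ne_empty j,
    fun h => hji (Finset.mem_singleton.1 (h ▸ Finset.mem_univ i)).symm⟩
  obtain ⟨p, hp, hpj⟩ := exists_getD_codeList_eq (extraCode G u) hj
  obtain ⟨y, hy, hyj⟩ := exists_primeCode_eq_getD (k := k) hR hC (j := p) (by omega)
  rw [hpj] at hyj
  have hyu : y ≠ u := fun h => Finset.singleton_ne_empty j (hyj ▸ h ▸ hu)
  refine ⟨y, hcl u (self_mem_twinClass u) y hy hyu.symm, ?_, hyj ▸ Finset.singleton_ne_empty j⟩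
  rw [hyj, Finset.mem_singleton]
  exact fun h => hji h.symm

theorem primeCode_exists_not_adj_of_eq_univ (hR : ∀ r ∈ R, IsTwinFree G r)
    (hmk : modCliqueStab G < 2 ^ k) (hk : 2 ≤ k) {u : V} (hu : primeCode G k R u = Finset.univ) :
    ∃ y, y ≠ u ∧ ¬ G.Adj u y ∧ primeCode G k R y ≠ ∅ ∧ primeCode G k R y ≠ Finset.univ := by
  rcases primeCode_mem_properCodes_or hmk hk u with h | ⟨he, hcard⟩
  · exact ((mem_properCodes.1 (hu ▸ h)).2 rfl).elim
  have hcl : ¬ IsCliqueSet G (twinClass G u) := fun hcl => by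
    rw [he, extraCode, if_pos hcl] at hu
    exact Finset.univ_nonempty.ne_empty hu.symm
  have hst := (twinClass_isCliqueSet_or_isStableSet u).resolve_left hcl
  have h4 : 4 ≤ 2 ^ k := Nat.pow_le_pow_right two_pos hk
  have hC : (twinClass G u).Nontrivial := Set.one_lt_ncard_iff_nontrivial.1 (by omega)
  obtain ⟨y, hy, hyu⟩ := hC.exists_ne u
  refine ⟨y, hyu, hst u (self_mem_twinClass u) y hy, ?_, fun h =>
    hyu (primeCode_injOn hR hmk hC hy (self_mem_twinClass u) (h.trans hu.symm))⟩
  rw [← twinClass_eq_of_mem hy] at hcl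
  exact primeCode_ne_empty hmk hk hcl

theorem primeCode_exists_crossing (hR : ∀ r ∈ R, IsTwinFree G r) {v₀ : V}
    (hbig : 2 ^ (k - 1) < (twinClass G v₀).ncard) {I : Set (Fin k)} (hI : I.Nontrivial) {j : Fin k}
    (hj : j ∉ I) :
    ∃ u, (∃ i ∈ I, i ∈ primeCode G k R u) ∧ (∃ j ∉ I, j ∈ primeCode G k R u) ∧
      ∃ i ∈ I, i ∉ primeCode G k R u := by
  obtain ⟨S, hS, hcross⟩ := exists_starCode_crossing hI hj
  obtain ⟨p, hp, hpS⟩ := exists_getD_codeList_eq_of_mem_starCodes (extraCode G v₀) hS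
  have hk' : k ≤ 2 ^ (k - 1) := by
    have := Nat.lt_two_pow_self (n := k - 1)
    omega
  obtain ⟨u, -, hu⟩ := exists_primeCode_eq_getD (k := k) hR
    (nontrivial_twinClass_of_two_pow_lt hbig) (j := p)
    (by have := card_starCodes_lt (k := k); omega)
  exact ⟨u, by rw [hu, hpS]; exact hcross⟩

/-- More than half of all codes occur on the large class `twinClass G v₀`, so they can neither
all contain `i` nor all avoid it. -/
theorem primeCode_exists_ne_of_eq_singleton (hR : ∀ r ∈ R, IsTwinFree G r)
    (hmk : modCliqueStab G < 2 ^ k) (hk : 2 ≤ k) {v₀ : V}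
    (hbig : 2 ^ (k - 1) < (twinClass G v₀).ncard) {a : V} {i : Fin k}
    (ha : primeCode G k R a = {i}) :
    ∃ v, v ≠ a ∧ ¬ (G.Adj v a ↔ i ∈ primeCode G k R v) := by
  set C := twinClass G v₀
  have hC := nontrivial_twinClass_of_two_pow_lt hbig
  have hinj := primeCode_injOn hR hmk hC
  obtain ⟨v₁, hv₁, hiv₁⟩ := hinj.exists_notMem_of_ncard_lt ((ncard_setOf_mem_le i).trans_lt hbig)
  by_cases haC : a ∈ C
  · rcases twinClass_isCliqueSet_or_isStableSet v₀ with hcl | hst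
    · have hva : v₁ ≠ a := fun h => hiv₁ (h ▸ ha ▸ Finset.mem_singleton_self i)
      exact ⟨v₁, hva, fun h => hiv₁ (h.1 (hcl v₁ hv₁ a haC hva))⟩
    · have hlt : {S : Finset (Fin k) | S.Nonempty ∧ i ∉ S}.ncard < (C \ {a}).ncard := by
        have := ncard_setOf_nonempty_notMem_lt i
        rw [Set.ncard_sdiff_singleton_of_mem haC]
        omega
      obtain ⟨v, ⟨hv, hva⟩, hS⟩ := (hinj.mono Set.sdiff_subset).exists_notMem_of_ncard_lt hlt
      have hcl : ¬ IsCliqueSet G (twinClass G v) := by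
        obtain ⟨x, hx, y, hy, hxy⟩ := hC
        rw [twinClass_eq_of_mem hv]
        exact fun hcl => hst x hx y hy (hcl x hx y hy hxy)
      have hv0 := Finset.nonempty_iff_ne_empty.2 (primeCode_ne_empty (R := R) hmk hk hcl)
      exact ⟨v, hva, fun h => hst v hv a haC (h.2 (not_not.1 fun hiv => hS ⟨hv0, hiv⟩))⟩
  · rcases isModule_twinClass v₀ a haC with hall | hnone
    · exact ⟨v₁, fun h => haC (h ▸ hv₁), fun h => hiv₁ (h.1 (hall v₁ hv₁).symm)⟩
    · obtain ⟨v, hv, hiv⟩ :=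
        hinj.exists_notMem_of_ncard_lt ((ncard_setOf_notMem_le i).trans_lt hbig)
      exact ⟨v, fun h => haC (h ▸ hv), fun h => hnone v hv (h.2 (not_not.1 hiv)).symm⟩

theorem isPrimeCoding_primeCode (hR : ∀ r ∈ R, IsTwinFree G r)
    (hRM : ∀ M, Minimal (IsNontrivialModule G) M → 2 < M.ncard → (∃ r ∈ M, r ∈ R) ∧ ∃ u ∈ M, u ∉ R)
    (hmk : modCliqueStab G < 2 ^ k) (hk : 2 ≤ k) {v₀ : V}
    (hbig : 2 ^ (k - 1) < (twinClass G v₀).ncard) : IsPrimeCoding G (primeCode G k R) where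
  subsingleton_of_isModule A hA hc := by
    refine hA.subsingleton_of_forall_eq (fun a b hab htw => ?_) (fun M hM h3 => ?_) hc
    · exact (primeCode_injOn hR hmk ⟨a, htw, b, self_mem_twinClass b, hab⟩).ne htw
        (self_mem_twinClass b) hab
    · obtain ⟨⟨r, hrM, hrR⟩, u, huM, huR⟩ := hRM M hM h3
      refine ⟨r, hrM, u, huM, fun h => ?_⟩
      rw [primeCode_of_isTwinFree (hM.isTwinFree h3 hrM),
        primeCode_of_isTwinFree (hM.isTwinFree h3 huM), if_pos hrR, if_neg huR] at h
      have h4 : 4 ≤ 2 ^ k := Nat.pow_le_pow_right two_pos hk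
      exact one_ne_zero (getD_codeList_injOn (fun h => (mem_properCodes.1 h).1 rfl)
        (Set.mem_Iio.2 (by omega)) (Set.mem_Iio.2 (by omega)) h)
  exists_crossing _ hI _ hj := primeCode_exists_crossing hR hbig hI hj
  exists_adj_of_eq_empty _ hu := primeCode_exists_adj_of_eq_empty hR hmk hk hu
  exists_not_adj_of_eq_univ _ hu := primeCode_exists_not_adj_of_eq_univ hR hmk hk hu
  exists_ne_of_eq_singleton _ _ ha := primeCode_exists_ne_of_eq_singleton hR hmk hk hbig ha

end Construction

theorem IsPrimeGraph.not_areTwins {W : Type*} {H : SimpleGraph W} (hH : IsPrimeGraph H) {x y : W}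
    (hxy : x ≠ y) : ¬ AreTwins H x y := fun htw => by
  rcases hH.2 _ (isModule_pair_iff.2 htw) with h | h
  · have := hH.1
    rw [← Set.ncard_univ, ← h, Set.ncard_pair hxy] at this
    omega
  · exact hxy (h (Set.mem_insert x _) (Set.mem_insert_of_mem x rfl))

theorem modCliqueStab_le_two_pow [Finite V] {p : ℕ} (hp : HasPrimeExt G p) :
    modCliqueStab G ≤ 2 ^ p := by
  obtain ⟨H, hHG, hH⟩ := hp
  obtain ⟨B, hB, hBcs, hBm⟩ := exists_ncard_eq_modCliqueStab G
  have hinj : Set.InjOn (fun a i => H.Adj (.inr i) (.inl a)) B := by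
    intro a ha b hb hab
    by_contra hne
    refine hH.not_areTwins (Sum.inl_injective.ne hne) ?_
    rintro (x | i) hxa hxb
    · rw [hHG, hHG]
      exact hB.areTwins hBcs ha hb x (fun h => hxa (congrArg _ h)) fun h => hxb (congrArg _ h)
    · exact iff_of_eq (congrFun hab i)
  calc modCliqueStab G = B.ncard := hBm.symm
    _ ≤ (Set.univ : Set (Fin p → Prop)).ncard :=
        Set.ncard_le_ncard_of_injOn _ (fun _ _ => Set.mem_univ _) hinj
    _ = 2 ^ p := by simp

theorem hasPrimeExt_of_two_pow_pred_lt [Finite V] {k : ℕ} (hlow : 2 ^ (k - 1) < modCliqueStab G)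
    (hup : modCliqueStab G < 2 ^ k) : HasPrimeExt G k := by
  have hk : 2 ≤ k := by
    by_contra hk
    interval_cases k <;> simp at hlow hup <;> omega
  have : NeZero k := ⟨by omega⟩
  obtain ⟨R, hR, hRM⟩ := exists_transversal G
  obtain ⟨B, hB, hBcs, hBm⟩ := exists_ncard_eq_modCliqueStab G
  obtain ⟨v₀, hv₀⟩ : B.Nonempty :=
    Set.nonempty_of_ncard_ne_zero (hBm ▸ (Nat.zero_lt_of_lt hlow).ne')
  have hbig : 2 ^ (k - 1) < (twinClass G v₀).ncard := by
    rwa [twinClass_eq_of_ncard_eq_modCliqueStab hB hBcs hBm hv₀, hBm]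
  refine ⟨extGraph G (primeCode G k R), fun _ _ => Iff.rfl,
    (isPrimeCoding_primeCode hR hRM hup hk hbig).isPrimeGraph ?_⟩
  have := Set.ncard_le_card B
  have := Nat.one_le_two_pow (n := k - 1)
  omega

end

theorem prime_bound_eq_clog {V : Type*} [Finite V] (G : SimpleGraph V)
    (h2 : 2 ≤ modCliqueStab G) (hnp : ∀ k : ℕ, modCliqueStab G ≠ 2 ^ k) :
    primeBound G = Nat.clog 2 (modCliqueStab G) := by
  have hlow : 2 ^ (Nat.clog 2 (modCliqueStab G) - 1) < modCliqueStab G :=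
    Nat.pow_pred_clog_lt_self one_lt_two h2
  have hup : modCliqueStab G < 2 ^ Nat.clog 2 (modCliqueStab G) :=
    (Nat.le_pow_clog one_lt_two _).lt_of_ne (hnp _)
  have hext := hasPrimeExt_of_two_pow_pred_lt hlow hup
  exact le_antisymm (Nat.sInf_le hext) (le_csInf ⟨_, hext⟩ fun p hp =>
    (Nat.clog_le_iff_le_pow one_lt_two).2 (modCliqueStab_le_two_pow hp))
end
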